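/- arXiv:1406.2485 — 11 statements merged into one kernel-verified Lean document; each statement's English description precedes it below -/
import Mathlib

section
/- Let I ⊆ ℝ be an open interval, let f : ℝ → ℝ be nonnegative on I and of class C^{1,1} on its closure. Let t₀ ∈ I and M > 0 be such that the interval I_{t₀} := {t : |t - t₀| < M⁻¹ f(t₀)^{1/2}} is contained in I and M² ≥ Lip_{I_{t₀}}(f'). Then |f'(t₀)| ≤ (M + M⁻¹ Lip_{I_{t₀}}(f')) f(t₀)^{1/2} ≤ 2M f(t₀)^{1/2}. -/
open Set NNReal

/-!
Since `f'` is `K`-Lipschitz, `f` lies below its tangent parabola at `t₀`: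
`0 ≤ f (t₀ + h) ≤ f t₀ + f' t₀ * h + K h²` for `|h| < r := M⁻¹ √(f t₀)`. Choosing the sign of `h`
against `f' t₀` and letting `|h| → r` gives `|f' t₀| r ≤ f t₀ + K r²`, which after dividing by
`r` is the claim. When `f t₀ = 0`, `t₀` is a minimum of `f` and `f' t₀ = 0`.
-/

theorem abs_sub_sub_mul_le_of_lipschitzOnWith {S : Set ℝ} (hS : Convex ℝ S) {f f' : ℝ → ℝ}
    {K : ℝ≥0} (hf : ∀ t ∈ S, HasDerivWithinAt f (f' t) S t) (hLip : LipschitzOnWith K f' S)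
    {x y : ℝ} (hx : x ∈ S) (hy : y ∈ S) :
    |f y - f x - f' x * (y - x)| ≤ K * (y - x) ^ 2 := by
  have hxy : uIcc x y ⊆ S := hS.ordConnected.uIcc_subset hx hy
  have hderiv : ∀ u ∈ uIcc x y,
      HasDerivWithinAt (fun u => f u - f' x * u) (f' u - f' x) (uIcc x y) u := fun u hu =>
    ((hf u (hxy hu)).mono hxy).sub ((hasDerivWithinAt_id u _).const_mul (f' x) |>.congr_deriv
      (mul_one _))
  have hbound : ∀ u ∈ uIcc x y, ‖f' u - f' x‖ ≤ K * |y - x| := fun u hu =>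
    calc ‖f' u - f' x‖ = dist (f' u) (f' x) := (dist_eq_norm _ _).symm
      _ ≤ K * dist u x := hLip.dist_le_mul u (hxy hu) x hx
      _ ≤ K * |y - x| := by gcongr; exact abs_sub_left_of_mem_uIcc hu
  have hmvt := (convex_uIcc x y).norm_image_sub_le_of_norm_hasDerivWithin_le hderiv hbound
    left_mem_uIcc right_mem_uIcc
  simp only [Real.norm_eq_abs] at hmvt
  calc |f y - f x - f' x * (y - x)| = |f y - f' x * y - (f x - f' x * x)| := by ring_nf
    _ ≤ K * |y - x| * |y - x| := hmvt
    _ = K * (y - x) ^ 2 := by rw [mul_assoc, ← sq, sq_abs]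

theorem abs_deriv_mul_le_of_nonneg_of_lipschitzOnWith {f f' : ℝ → ℝ} {t₀ r : ℝ} {K : ℝ≥0}
    (hr : 0 < r)
    (hf : ∀ t ∈ Ioo (t₀ - r) (t₀ + r), HasDerivWithinAt f (f' t) (Ioo (t₀ - r) (t₀ + r)) t)
    (hnonneg : ∀ t ∈ Ioo (t₀ - r) (t₀ + r), 0 ≤ f t)
    (hLip : LipschitzOnWith K f' (Ioo (t₀ - r) (t₀ + r))) :
    |f' t₀| * r ≤ f t₀ + K * r ^ 2 := by
  have hmem : ∀ h, |h| < r → t₀ + h ∈ Ioo (t₀ - r) (t₀ + r) := fun h hh => by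
    rw [abs_lt] at hh
    constructor <;> linarith
  have hparabola : ∀ h, |h| < r → -(f' t₀ * h) ≤ f t₀ + K * h ^ 2 := fun h hh => by
    have htaylor := abs_sub_sub_mul_le_of_lipschitzOnWith (convex_Ioo _ _) hf hLip
      (hmem 0 (by simpa using hr)) (hmem h hh)
    simp only [add_zero, add_sub_cancel_left] at htaylor
    linarith [(abs_le.mp htaylor).2, hnonneg _ (hmem h hh)]
  have hstep : ∀ h ∈ Ioo 0 r, |f' t₀| * h ≤ f t₀ + K * h ^ 2 := by
    rintro h ⟨hpos, hlt⟩
    have habs : |h| < r := by rwa [abs_of_pos hpos]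
    rw [← abs_of_pos hpos, ← abs_mul, abs_le', abs_of_pos hpos]
    constructor
    · simpa using hparabola (-h) (by rwa [abs_neg])
    · exact hparabola h habs
  refine le_on_closure hstep (by fun_prop) (by fun_prop) ?_
  rw [closure_Ioo hr.ne]
  exact right_mem_Icc.mpr hr.le

theorem stmt0_general (I : Set ℝ) (hIopen : IsOpen I)
    (f f' : ℝ → ℝ)
    (hderiv : ∀ t ∈ I, HasDerivAt f (f' t) t)
    (hnonneg : ∀ t ∈ I, 0 ≤ f t)
    (t₀ : ℝ) (ht₀ : t₀ ∈ I) (M : ℝ) (hM : 0 < M)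
    (J : Set ℝ)
    (hJ : J = Ioo (t₀ - M⁻¹ * Real.sqrt (f t₀)) (t₀ + M⁻¹ * Real.sqrt (f t₀)))
    (hJI : J ⊆ I)
    (K : ℝ) (hK : 0 ≤ K)
    (hLip : LipschitzOnWith (Real.toNNReal K) f' J)
    (hKM : K ≤ M ^ 2) :
    |f' t₀| ≤ (M + M⁻¹ * K) * Real.sqrt (f t₀) ∧
      (M + M⁻¹ * K) * Real.sqrt (f t₀) ≤ 2 * M * Real.sqrt (f t₀) := by
  have hMK : M⁻¹ * K ≤ M := by
    rw [inv_mul_le_iff₀ hM]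
    nlinarith
  refine ⟨?_, by gcongr; linarith⟩
  rcases (Real.sqrt_nonneg (f t₀)).eq_or_lt with hs | hs
  · have hmin : IsLocalMin f t₀ := by
      filter_upwards [hIopen.mem_nhds ht₀] with t ht
      rw [Real.sqrt_eq_zero'.mp hs.symm |>.antisymm (hnonneg t₀ ht₀)]
      exact hnonneg t ht
    simp [hmin.hasDerivAt_eq_zero (hderiv t₀ ht₀), ← hs]
  · subst hJ
    have hr : 0 < M⁻¹ * √(f t₀) := by positivity
    have hquad := abs_deriv_mul_le_of_nonneg_of_lipschitzOnWith hr
      (fun t ht => (hderiv t (hJI ht)).hasDerivWithinAt) (fun t ht => hnonneg t (hJI ht)) hLip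
    rw [Real.coe_toNNReal K hK] at hquad
    rw [← mul_le_mul_iff_of_pos_right hr]
    calc |f' t₀| * (M⁻¹ * √(f t₀)) ≤ f t₀ + K * (M⁻¹ * √(f t₀)) ^ 2 := hquad
      _ = (M + M⁻¹ * K) * √(f t₀) * (M⁻¹ * √(f t₀)) := by
        field_simp
        rw [Real.sq_sqrt (hnonneg t₀ ht₀)]
        ring

/-- Glaeser's inequality: if `f` is nonnegative on an open interval `I`, differentiable with
derivative `f'`, `t₀ ∈ I`, `M > 0`, the interval `J = (t₀ - M⁻¹√(f t₀), t₀ + M⁻¹√(f t₀))` is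
contained in `I`, and `f'` is Lipschitz on `J` with constant `K ≤ M²`, then
`|f' t₀| ≤ (M + M⁻¹ K) √(f t₀) ≤ 2 M √(f t₀)`. -/
theorem stmt0 (I : Set ℝ) (hIopen : IsOpen I) (hIconv : Convex ℝ I)
    (f f' : ℝ → ℝ)
    (hderiv : ∀ t ∈ I, HasDerivAt f (f' t) t)
    (hnonneg : ∀ t ∈ I, 0 ≤ f t)
    (t₀ : ℝ) (ht₀ : t₀ ∈ I) (M : ℝ) (hM : 0 < M)
    (J : Set ℝ)
    (hJ : J = Ioo (t₀ - M⁻¹ * Real.sqrt (f t₀)) (t₀ + M⁻¹ * Real.sqrt (f t₀)))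
    (hJI : J ⊆ I)
    (K : ℝ) (hK : 0 ≤ K)
    (hLip : LipschitzOnWith (Real.toNNReal K) f' J)
    (hKM : K ≤ M ^ 2) :
    |f' t₀| ≤ (M + M⁻¹ * K) * Real.sqrt (f t₀) ∧
      (M + M⁻¹ * K) * Real.sqrt (f t₀) ≤ 2 * M * Real.sqrt (f t₀) :=
  stmt0_general I hIopen f f' hderiv hnonneg t₀ ht₀ M hM J hJ hJI K hK hLip hKM
end

section
/- Let P(x) = a₀ + a₁x + ⋯ + a_m x^m be a complex polynomial of degree at most m satisfying |P(x)| ≤ A for all x in the real interval [0, B], where A, B > 0. Then for every j = 0, …, m one has |a_j| ≤ (2m)^{m+1} · A · B^{-j}. -/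
/-!
Interpolate `P` at the `m + 1` equidistant nodes `x_i = i B / m`. The `i`-th Lagrange basis
polynomial is `∏_{k ≠ i} (X - x_k)` divided by `∏_{k ≠ i} (x_i - x_k)`. The roots `x_k` have size
at most `B`, so the `j`-th coefficient of the numerator is at most `2^m B^(m - j)`, while the
denominator is a product of `m` factors of size at least `B / m`. Summing the `m + 1` terms gives
`|a_j| B^j ≤ (m + 1) A (2m)^m ≤ (2m)^(m+1) A`.
-/

open Polynomial Finset

lemma norm_coeff_prod_X_sub_C_mul_pow_le {R ι : Type*} [SeminormedCommRing R] [NormOneClass R]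
    {r : ℝ} (hr : 0 ≤ r) (s : Finset ι) (c : ι → R) (hc : ∀ i ∈ s, ‖c i‖ ≤ r) (k : ℕ) :
    ‖(∏ i ∈ s, (X - C (c i))).coeff k‖ * r ^ k ≤ 2 ^ #s * r ^ #s := by
  classical
  induction s using Finset.induction_on generalizing k with
  | empty => rcases k with _ | k <;> simp [coeff_one]
  | @insert a s ha ih =>
    have hQ := ih (fun i hi => hc i (mem_insert_of_mem hi))
    set Q := ∏ i ∈ s, (X - C (c i))
    set M := 2 ^ #s * r ^ #s
    have hXQ : ‖(X * Q).coeff k‖ * r ^ k ≤ r * M := by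
      rcases k with _ | k
      · simpa using mul_nonneg hr ((by positivity : (0 : ℝ) ≤ _).trans (hQ 0))
      · rw [coeff_X_mul, pow_succ, ← mul_assoc, mul_comm _ r]
        exact mul_le_mul_of_nonneg_left (hQ k) hr
    have hCQ : ‖(C (c a) * Q).coeff k‖ * r ^ k ≤ r * M := calc
      ‖(C (c a) * Q).coeff k‖ * r ^ k ≤ ‖c a‖ * (‖Q.coeff k‖ * r ^ k) := by
        rw [coeff_C_mul, ← mul_assoc]; gcongr; exact norm_mul_le _ _
      _ ≤ r * M := mul_le_mul (hc a (mem_insert_self a s)) (hQ k) (by positivity) hr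
    rw [prod_insert ha, card_insert_of_notMem ha, sub_mul, coeff_sub]
    calc ‖(X * Q).coeff k - (C (c a) * Q).coeff k‖ * r ^ k
        ≤ ‖(X * Q).coeff k‖ * r ^ k + ‖(C (c a) * Q).coeff k‖ * r ^ k := by
          rw [← add_mul]; gcongr; exact norm_sub_le _ _
      _ ≤ 2 ^ (#s + 1) * r ^ (#s + 1) := by rw [pow_succ, pow_succ]; linarith

section Lagrange

variable {K ι : Type*} [NormedField K] [DecidableEq ι] {s : Finset ι} {v : ι → K} {δ r : ℝ}

lemma Lagrange.basis_eq_C_mul_prod_X_sub_C (i : ι) :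
    Lagrange.basis s v i =
      C (∏ k ∈ s.erase i, (v i - v k)⁻¹) * ∏ k ∈ s.erase i, (X - C (v k)) := by
  rw [map_prod, ← prod_mul_distrib]
  rfl

lemma Lagrange.norm_coeff_basis_mul_pow_le (hδ : 0 < δ)
    (hsep : ∀ i ∈ s, ∀ k ∈ s, i ≠ k → δ ≤ ‖v i - v k‖) (hr : ∀ i ∈ s, ‖v i‖ ≤ r)
    {i : ι} (hi : i ∈ s) (j : ℕ) :
    ‖(Lagrange.basis s v i).coeff j‖ * r ^ j ≤ (2 * r / δ) ^ (#s - 1) := by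
  have hr0 : 0 ≤ r := (norm_nonneg _).trans (hr i hi)
  have hcard : #(s.erase i) = #s - 1 := card_erase_of_mem hi
  have hden : ‖∏ k ∈ s.erase i, (v i - v k)⁻¹‖ ≤ δ⁻¹ ^ (#s - 1) := by
    rw [norm_prod, ← hcard, ← prod_const]
    refine prod_le_prod (fun _ _ => norm_nonneg _) fun k hk => ?_
    rw [norm_inv]
    exact inv_anti₀ hδ (hsep i hi k (mem_of_mem_erase hk) (ne_of_mem_erase hk).symm)
  have hnum := norm_coeff_prod_X_sub_C_mul_pow_le hr0 (s.erase i) v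
    (fun k hk => hr k (mem_of_mem_erase hk)) j
  rw [hcard] at hnum
  rw [Lagrange.basis_eq_C_mul_prod_X_sub_C, coeff_C_mul, norm_mul, mul_assoc]
  calc _ ≤ δ⁻¹ ^ (#s - 1) * (2 ^ (#s - 1) * r ^ (#s - 1)) :=
        mul_le_mul hden hnum (by positivity) (by positivity)
    _ = (2 * r / δ) ^ (#s - 1) := by rw [div_eq_mul_inv, mul_pow, mul_pow]; ring

lemma norm_coeff_mul_pow_le_of_norm_eval_le {P : K[X]} {A : ℝ} (hdeg : P.degree < #s)
    (hδ : 0 < δ) (hsep : ∀ i ∈ s, ∀ k ∈ s, i ≠ k → δ ≤ ‖v i - v k‖)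
    (hr : ∀ i ∈ s, ‖v i‖ ≤ r) (hP : ∀ i ∈ s, ‖P.eval (v i)‖ ≤ A) (j : ℕ) :
    ‖P.coeff j‖ * r ^ j ≤ #s * (A * (2 * r / δ) ^ (#s - 1)) := by
  have hinj : Set.InjOn v s := fun i hi k hk hik => by
    by_contra hne
    have := hsep i hi k hk hne
    rw [hik, sub_self, norm_zero] at this
    exact this.not_gt hδ
  obtain rfl | ⟨i₀, hi₀⟩ := s.eq_empty_or_nonempty
  · simp [show P = 0 by simpa using hdeg]
  have hr0 : 0 ≤ r := (norm_nonneg _).trans (hr i₀ hi₀)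
  rw [Lagrange.eq_interpolate hinj hdeg, Lagrange.interpolate_apply, finsetSum_coeff]
  calc ‖∑ i ∈ s, (C (P.eval (v i)) * Lagrange.basis s v i).coeff j‖ * r ^ j
      ≤ ∑ i ∈ s, ‖(C (P.eval (v i)) * Lagrange.basis s v i).coeff j‖ * r ^ j := by
        rw [← sum_mul]
        gcongr
        exact norm_sum_le _ _
    _ ≤ ∑ _i ∈ s, A * (2 * r / δ) ^ (#s - 1) := by
        refine sum_le_sum fun i hi => ?_
        rw [coeff_C_mul, norm_mul, mul_assoc]
        exact mul_le_mul (hP i hi) (Lagrange.norm_coeff_basis_mul_pow_le hδ hsep hr hi j)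
          (by positivity) ((norm_nonneg _).trans (hP i hi))
    _ = _ := by rw [sum_const, nsmul_eq_mul]

end Lagrange

lemma le_norm_ofReal_natCast_mul_sub {h : ℝ} (hh : 0 ≤ h) {i k : ℕ} (hik : i ≠ k) :
    h ≤ ‖((i * h : ℝ) : ℂ) - ((k * h : ℝ) : ℂ)‖ := by
  rw [← Complex.ofReal_sub, Complex.norm_real, ← sub_mul, norm_mul, Real.norm_of_nonneg hh]
  refine le_mul_of_one_le_left hh ?_
  rw [Real.norm_eq_abs]
  exact_mod_cast Int.one_le_abs (sub_ne_zero.mpr (Nat.cast_injective.ne hik))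

theorem stmt1_general (m : ℕ) (hm : 1 ≤ m) (P : Polynomial ℂ) (hdeg : P.natDegree ≤ m)
    (A B : ℝ) (hB : 0 < B)
    (hP : ∀ x ∈ Set.Icc (0 : ℝ) B, ‖P.eval (x : ℂ)‖ ≤ A) :
    ∀ j ≤ m, ‖P.coeff j‖ ≤ (2 * (m : ℝ)) ^ (m + 1) * A * B ^ (-(j : ℤ)) := by
  intro j _
  have hm1 : (1 : ℝ) ≤ m := by exact_mod_cast hm
  set h : ℝ := B / m
  have hh : 0 < h := by positivity
  have hnodes : ∀ i ∈ range (m + 1), (i * h : ℝ) ∈ Set.Icc 0 B := fun i hi => by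
    have him : (i : ℝ) ≤ m := by exact_mod_cast Nat.lt_succ_iff.mp (mem_range.mp hi)
    refine ⟨by positivity, ?_⟩
    calc (i * h : ℝ) ≤ m * h := by gcongr
      _ = B := by simp only [h]; field_simp
  have hdeg' : P.degree < #(range (m + 1)) := by
    rw [card_range]
    exact degree_le_natDegree.trans_lt (by exact_mod_cast Nat.lt_succ_of_le hdeg)
  have hcoeff := norm_coeff_mul_pow_le_of_norm_eval_le (v := fun i : ℕ => ((i * h : ℝ) : ℂ))
    hdeg' hh (fun i _ k _ hik => le_norm_ofReal_natCast_mul_sub hh.le hik)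
    (fun i hi => by
      rw [Complex.norm_real, Real.norm_of_nonneg (hnodes i hi).1]
      exact (hnodes i hi).2)
    (fun i hi => hP _ (hnodes i hi)) j
  have hratio : 2 * B / h = 2 * m := by simp only [h]; field_simp
  rw [card_range, Nat.add_sub_cancel, hratio] at hcoeff
  have hA : 0 ≤ A := (norm_nonneg _).trans (hP 0 ⟨le_rfl, hB.le⟩)
  rw [zpow_neg, zpow_natCast, ← div_eq_mul_inv, le_div_iff₀ (by positivity)]
  calc ‖P.coeff j‖ * B ^ j ≤ ((m + 1 : ℕ) : ℝ) * (A * (2 * m) ^ m) := hcoeff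
    _ ≤ 2 * m * (A * (2 * m) ^ m) := by push_cast; gcongr; linarith
    _ = (2 * m) ^ (m + 1) * A := by ring

/-- If `P(x) = a₀ + a₁ x + ⋯ + a_m x^m` is a complex polynomial of degree at most `m ≥ 1`
with `|P(x)| ≤ A` for all real `x ∈ [0, B]` (where `A, B > 0`), then
`|a_j| ≤ (2m)^(m+1) · A · B^(-j)` for every `j = 0, …, m`. -/
theorem stmt1 (m : ℕ) (hm : 1 ≤ m) (P : Polynomial ℂ) (hdeg : P.natDegree ≤ m)
    (A B : ℝ) (hA : 0 < A) (hB : 0 < B)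
    (hP : ∀ x ∈ Set.Icc (0 : ℝ) B, ‖P.eval (x : ℂ)‖ ≤ A) :
    ∀ j ≤ m, ‖P.coeff j‖ ≤ (2 * (m : ℝ)) ^ (m + 1) * A * B ^ (-(j : ℤ)) :=
  stmt1_general m hm P hdeg A B hB hP
end

section
/- Let I ⊆ ℝ be an open bounded interval and f ∈ C^{m-1,1}(closure I), i.e., f is C^{m-1} with f^{(m-1)} Lipschitz on I. Then there is a constant C depending only on m such that for all t ∈ I and all k = 1, …, m: |f^{(k)}(t)| ≤ C |I|^{-k} ( ‖f‖_{L^∞(I)} + Lip_I(f^{(m-1)}) |I|^m ), where the inequality for k = m is understood pointwise wherever f^{(m)} exists (almost everywhere). -/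
/-!
Taylor's theorem with the Lipschitz remainder estimate `|f y - T(y)| ≤ L |y - t|^m`, where `T`
is the Taylor polynomial of `f` of degree `m - 1` at `t`, bounds `T` by `‖f‖_∞ + L |I|^m` on a
segment of length `|I|/2` that starts at `t` and stays inside `I`. Rescaled to `[0, 1)`, this is
a bound on a polynomial of degree `< m` at `m` fixed nodes; the Vandermonde matrix of these nodes
is invertible, so every coefficient `f^{(k)}(t)/k! · (|I|/2)^k` is bounded by a constant multiple
of `‖f‖_∞ + L |I|^m`. The top derivative is bounded by the Lipschitz constant `L` itself.
-/

open Set Finset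
open scoped Nat

section

open Matrix

attribute [local instance] Matrix.linftyOpNormedAddCommGroup

theorem Matrix.exists_norm_le_mul_norm_vandermonde_mulVec {m : ℕ} {x : Fin m → ℝ}
    (hx : Function.Injective x) :
    ∃ C, 0 ≤ C ∧ ∀ d : Fin m → ℝ, ‖d‖ ≤ C * ‖vandermonde x *ᵥ d‖ := by
  have hdet : IsUnit (vandermonde x).det := (det_vandermonde_ne_zero_iff.2 hx).isUnit
  refine ⟨‖(vandermonde x)⁻¹‖, norm_nonneg _, fun d => ?_⟩
  calc ‖d‖ = ‖(vandermonde x)⁻¹ *ᵥ (vandermonde x *ᵥ d)‖ := by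
        rw [mulVec_mulVec, nonsing_inv_mul _ hdet, one_mulVec]
    _ ≤ _ := linfty_opNorm_mulVec _ _

theorem exists_abs_mul_pow_le_of_abs_sum_le (n : ℕ) :
    ∃ C, 0 ≤ C ∧ ∀ (c : ℕ → ℝ) (r M : ℝ),
      (∀ u ∈ Ico (0 : ℝ) 1, |∑ j ∈ range (n + 1), c j * (r * u) ^ j| ≤ M) →
      ∀ k ≤ n, |c k| * |r| ^ k ≤ C * M := by
  set x : Fin (n + 1) → ℝ := fun i => (i : ℝ) / (n + 1)
  have hx : Function.Injective x := fun i j hij => by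
    rw [div_left_inj' (by positivity)] at hij
    exact Fin.ext (by exact_mod_cast hij)
  have hxIco : ∀ i, x i ∈ Ico (0 : ℝ) 1 := fun i =>
    ⟨by positivity, (div_lt_one (by positivity)).2 (by exact_mod_cast i.isLt)⟩
  obtain ⟨C, hC, hvdm⟩ := exists_norm_le_mul_norm_vandermonde_mulVec hx
  refine ⟨C, hC, fun c r M hM k hk => ?_⟩
  have hM₀ : 0 ≤ M := (abs_nonneg _).trans (hM 0 ⟨le_rfl, zero_lt_one⟩)
  set d : Fin (n + 1) → ℝ := fun j => c j * r ^ (j : ℕ)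
  have hvdm_d : ‖vandermonde x *ᵥ d‖ ≤ M := by
    refine (pi_norm_le_iff_of_nonneg hM₀).2 fun i => ?_
    convert hM (x i) (hxIco i) using 2
    simp only [mulVec, dotProduct, vandermonde_apply, d, Real.norm_eq_abs]
    rw [← Fin.sum_univ_eq_sum_range (fun j => c j * (r * x i) ^ j)]
    exact congrArg _ (sum_congr rfl fun j _ => by ring)
  calc |c k| * |r| ^ k = ‖d ⟨k, Nat.lt_succ_of_le hk⟩‖ := by simp [d]
    _ ≤ ‖d‖ := norm_le_pi_norm d _
    _ ≤ C * M := (hvdm d).trans (by gcongr)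

end

theorem abs_sub_taylorWithinEval_le_of_lipschitzOnWith {s : Set ℝ} (hs : UniqueDiffOn ℝ s)
    (hs' : s.OrdConnected) {x₀ x : ℝ} (hx₀ : x₀ ∈ s) (hx : x ∈ s) {L : NNReal} :
    ∀ {n : ℕ} {g : ℝ → ℝ}, ContDiffOn ℝ n g s →
      LipschitzOnWith L (iteratedDerivWithin n g s) s →
      |g x - taylorWithinEval g n s x₀ x| ≤ L * |x - x₀| ^ (n + 1)
  | 0, g, _, hlip => by
    simpa [Real.dist_eq] using hlip.dist_le_mul x hx x₀ hx₀
  | n + 1, g, hg, hlip => by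
    have hderiv : ∀ y ∈ s, HasDerivWithinAt (fun y => g y - taylorWithinEval g (n + 1) s x₀ y)
        (derivWithin g s y - taylorWithinEval (derivWithin g s) n s x₀ y) s y := fun y hy =>
      ((hg.differentiableOn (by simp) y hy).hasDerivWithinAt).sub
        (hasDerivAt_taylorWithinEval_succ g n).hasDerivWithinAt
    have hremainder : ∀ y ∈ uIcc x₀ x,
        ‖derivWithin g s y - taylorWithinEval (derivWithin g s) n s x₀ y‖ ≤
          L * |x - x₀| ^ (n + 1) := fun y hy => by
      have hys : y ∈ s := hs'.uIcc_subset hx₀ hx hy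
      rw [iteratedDerivWithin_succ'] at hlip
      calc _ ≤ L * |y - x₀| ^ (n + 1) :=
            abs_sub_taylorWithinEval_le_of_lipschitzOnWith hs hs' hx₀ hys
              (hg.derivWithin hs (by simp)) hlip
        _ ≤ L * |x - x₀| ^ (n + 1) := by gcongr L * ?_ ^ _; exact abs_sub_left_of_mem_uIcc hy
    have := (convex_uIcc x₀ x).norm_image_sub_le_of_norm_hasDerivWithin_le
      (fun y hy => (hderiv y (hs'.uIcc_subset hx₀ hx hy)).mono (hs'.uIcc_subset hx₀ hx))
      hremainder left_mem_uIcc right_mem_uIcc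
    simp only [taylorWithinEval_self, sub_self, sub_zero, Real.norm_eq_abs] at this
    calc _ ≤ L * |x - x₀| ^ (n + 1) * |x - x₀| := this
      _ = _ := by ring

theorem bddAbove_abs_image_Ioo_of_lipschitzOnWith_iteratedDerivWithin {f : ℝ → ℝ} {a b : ℝ}
    {n : ℕ} {L : NNReal} (hf : ContDiffOn ℝ n f (Ioo a b))
    (hlip : LipschitzOnWith L (iteratedDerivWithin n f (Ioo a b)) (Ioo a b)) :
    BddAbove ((fun y => |f y|) '' Ioo a b) := by
  rcases (Ioo a b).eq_empty_or_nonempty with h | ⟨t, ht⟩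
  · simp [h]
  have hT : Continuous (taylorWithinEval f n (Ioo a b) t) := by
    simp_rw [funext (taylor_within_apply f n (Ioo a b) t)]
    fun_prop
  set T := taylorWithinEval f n (Ioo a b) t
  obtain ⟨B, hB⟩ := (isCompact_Icc (a := a) (b := b)).bddAbove_image hT.abs.continuousOn
  refine ⟨B + L * (b - a) ^ (n + 1), ?_⟩
  rintro _ ⟨y, hy, rfl⟩
  have hyt : |y - t| ≤ b - a :=
    Real.dist_le_of_mem_Icc (Ioo_subset_Icc_self hy) (Ioo_subset_Icc_self ht)
  calc |f y| ≤ |T y| + |f y - T y| := norm_le_norm_add_norm_sub' (f y) (T y)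
    _ ≤ B + L * |y - t| ^ (n + 1) := add_le_add (hB ⟨y, Ioo_subset_Icc_self hy, rfl⟩)
        (abs_sub_taylorWithinEval_le_of_lipschitzOnWith isOpen_Ioo.uniqueDiffOn ordConnected_Ioo
          ht hy hf hlip)
    _ ≤ B + L * (b - a) ^ (n + 1) := by gcongr

theorem le_biSup_of_bddAbove_image {α : Type*} {g : α → ℝ} {s : Set α}
    (hg : BddAbove (g '' s)) {y : α} (hy : y ∈ s) : g y ≤ ⨆ z ∈ s, g z :=
  le_ciSup₂ (f := fun z (_ : z ∈ s) => g z)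
    (hg.mono fun _ hv => by
      obtain ⟨z, hz, rfl⟩ := by simpa only [mem_iUnion, Set.mem_range] using hv
      exact ⟨z, hz, rfl⟩) y hy

theorem exists_abs_eq_and_add_mul_mem_Ioo {a b t : ℝ} (ht : t ∈ Ioo a b) :
    ∃ r, |r| = (b - a) / 2 ∧ ∀ u ∈ Ico (0 : ℝ) 1, t + r * u ∈ Ioo a b := by
  obtain ⟨hat, htb⟩ := ht
  rcases le_or_gt t ((a + b) / 2) with h | h
  · refine ⟨(b - a) / 2, abs_of_pos (by linarith),
      fun u ⟨hu₀, hu₁⟩ => ⟨?_, ?_⟩⟩ <;> nlinarith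
  · refine ⟨-((b - a) / 2), by rw [abs_neg, abs_of_pos (by linarith)],
      fun u ⟨hu₀, hu₁⟩ => ⟨?_, ?_⟩⟩ <;> nlinarith

theorem exists_abs_iteratedDerivWithin_mul_pow_le (n : ℕ) :
    ∃ C, 0 ≤ C ∧ ∀ (a b : ℝ) (f : ℝ → ℝ) (L : NNReal),
      ContDiffOn ℝ n f (Ioo a b) →
      LipschitzOnWith L (iteratedDerivWithin n f (Ioo a b)) (Ioo a b) →
      ∀ t ∈ Ioo a b, ∀ k ≤ n, |iteratedDerivWithin k f (Ioo a b) t| * (b - a) ^ k ≤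
        C * ((⨆ s ∈ Ioo a b, |f s|) + L * (b - a) ^ (n + 1)) := by
  obtain ⟨C, hC, hcoeff⟩ := exists_abs_mul_pow_le_of_abs_sum_le n
  refine ⟨n ! * 2 ^ n * C, by positivity, fun a b f L hf hlip t ht k hk => ?_⟩
  set I := Ioo a b
  set M := (⨆ s ∈ I, |f s|) + L * (b - a) ^ (n + 1)
  have hM : 0 ≤ M :=
    add_nonneg (Real.iSup_nonneg fun _ => Real.iSup_nonneg fun _ => abs_nonneg _)
      (mul_nonneg L.2 (pow_nonneg (by linarith [ht.1, ht.2]) _))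
  obtain ⟨r, hr, hrI⟩ := exists_abs_eq_and_add_mul_mem_Ioo ht
  have htaylor : ∀ u ∈ Ico (0 : ℝ) 1,
      |∑ j ∈ range (n + 1), iteratedDerivWithin j f I t / j ! * (r * u) ^ j| ≤ M := by
    intro u hu
    set y := t + r * u
    have hy : y ∈ I := hrI u hu
    have hsum : ∑ j ∈ range (n + 1), iteratedDerivWithin j f I t / j ! * (r * u) ^ j =
        taylorWithinEval f n I t y := by
      rw [taylor_within_apply]
      refine sum_congr rfl fun j _ => ?_
      simp only [y, add_sub_cancel_left, smul_eq_mul]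
      ring
    rw [hsum]
    calc _ ≤ |f y| + |f y - taylorWithinEval f n I t y| :=
          norm_le_norm_add_norm_sub (f y) (taylorWithinEval f n I t y)
      _ ≤ (⨆ s ∈ I, |f s|) + L * |y - t| ^ (n + 1) := add_le_add
          (le_biSup_of_bddAbove_image
            (bddAbove_abs_image_Ioo_of_lipschitzOnWith_iteratedDerivWithin hf hlip) hy)
          (abs_sub_taylorWithinEval_le_of_lipschitzOnWith isOpen_Ioo.uniqueDiffOn ordConnected_Ioo
            ht hy hf hlip)
      _ ≤ M := by
          simp only [M]
          gcongr
          exact Real.dist_le_of_mem_Icc (Ioo_subset_Icc_self hy) (Ioo_subset_Icc_self ht)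
  calc |iteratedDerivWithin k f I t| * (b - a) ^ k
      = k ! * 2 ^ k * (|iteratedDerivWithin k f I t / k !| * |r| ^ k) := by
        rw [hr, abs_div, Nat.abs_cast, div_pow]
        field_simp
    _ ≤ k ! * 2 ^ k * (C * M) :=
        mul_le_mul_of_nonneg_left (hcoeff _ r M htaylor k hk) (by positivity)
    _ ≤ n ! * 2 ^ n * C * M := by
        rw [← mul_assoc]
        gcongr
        norm_num

theorem stmt2_general (m : ℕ) :
    ∃ C : ℝ, 0 < C ∧
      ∀ (a b : ℝ), a < b → ∀ f : ℝ → ℝ, ∀ L : NNReal,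
        ContDiffOn ℝ (m - 1 : ℕ) f (Ioo a b) →
        LipschitzOnWith L (iteratedDerivWithin (m - 1) f (Ioo a b)) (Ioo a b) →
        (∀ t ∈ Ioo a b, ∀ k : ℕ, 1 ≤ k → k ≤ m - 1 →
          |iteratedDerivWithin k f (Ioo a b) t| ≤
            C * (b - a) ^ (-(k : ℤ)) *
              ((⨆ s ∈ Ioo a b, |f s|) + (L : ℝ) * (b - a) ^ m)) ∧
        (∀ t ∈ Ioo a b, ∀ g : ℝ,
          HasDerivWithinAt (iteratedDerivWithin (m - 1) f (Ioo a b)) g (Ioo a b) t →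
          |g| ≤ C * (b - a) ^ (-(m : ℤ)) *
              ((⨆ s ∈ Ioo a b, |f s|) + (L : ℝ) * (b - a) ^ m)) := by
  obtain ⟨C, hC, hbound⟩ := exists_abs_iteratedDerivWithin_mul_pow_le (m - 1)
  refine ⟨C + 1, by positivity, fun a b hab f L hf hlip =>
    ⟨fun t ht k hk₁ hkm => ?_, fun t ht g hg => ?_⟩⟩
  all_goals
    have hba : 0 < b - a := sub_pos.2 hab
    have hS : 0 ≤ ⨆ s ∈ Ioo a b, |f s| :=
      Real.iSup_nonneg fun _ => Real.iSup_nonneg fun _ => abs_nonneg _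
    rw [zpow_neg, zpow_natCast, mul_right_comm, ← div_eq_mul_inv, le_div_iff₀ (by positivity)]
  · have := hbound a b f L hf hlip t ht k hkm
    rw [Nat.sub_add_cancel (by omega)] at this
    exact this.trans (by gcongr; linarith)
  · have hgL : |g| ≤ L := (hg.hasDerivAt (isOpen_Ioo.mem_nhds ht)).le_of_lipschitzOn
      (isOpen_Ioo.mem_nhds ht) hlip
    calc |g| * (b - a) ^ m ≤ L * (b - a) ^ m := by gcongr
      _ ≤ (⨆ s ∈ Ioo a b, |f s|) + L * (b - a) ^ m := le_add_of_nonneg_left hS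
      _ ≤ _ := le_mul_of_one_le_left (by positivity) (by linarith)

/-- Interpolation inequality: for each `m ≥ 1` there is a constant `C = C(m)` such that for
every bounded open interval `I = (a,b)` and every `f ∈ C^{m-1,1}(I)` (i.e. `f` is `C^{m-1}`
on `I` with `f^{(m-1)}` Lipschitz with constant `L`), for all `t ∈ I` and `1 ≤ k ≤ m`:
`|f^{(k)}(t)| ≤ C |I|^{-k} (‖f‖_{L^∞(I)} + L |I|^m)`, where for `k = m` the inequality is
understood at points where the `m`-th derivative exists. -/
theorem stmt2 (m : ℕ) (hm : 1 ≤ m) :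
    ∃ C : ℝ, 0 < C ∧
      ∀ (a b : ℝ), a < b → ∀ f : ℝ → ℝ, ∀ L : NNReal,
        ContDiffOn ℝ (m - 1 : ℕ) f (Ioo a b) →
        LipschitzOnWith L (iteratedDerivWithin (m - 1) f (Ioo a b)) (Ioo a b) →
        (∀ t ∈ Ioo a b, ∀ k : ℕ, 1 ≤ k → k ≤ m - 1 →
          |iteratedDerivWithin k f (Ioo a b) t| ≤
            C * (b - a) ^ (-(k : ℤ)) *
              ((⨆ s ∈ Ioo a b, |f s|) + (L : ℝ) * (b - a) ^ m)) ∧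
        (∀ t ∈ Ioo a b, ∀ g : ℝ,
          HasDerivWithinAt (iteratedDerivWithin (m - 1) f (Ioo a b)) g (Ioo a b) t →
          |g| ≤ C * (b - a) ^ (-(m : ℤ)) *
              ((⨆ s ∈ Ioo a b, |f s|) + (L : ℝ) * (b - a) ^ m)) :=
  stmt2_general m
end

section
/- Let G be a finite group acting by linear isometries on a finite-dimensional real inner product space V. Let I ⊆ ℝ be an interval, let c̄ : I → V be Lipschitz with constant L, and let c̃ : I → V be continuous such that for every t ∈ I there exists g ∈ G with c̃(t) = g·c̄(t). Then c̃ is Lipschitz on I with the same constant L. -/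
open scoped NNReal

/-- Continuous selections from orbits of a Lipschitz curve under a finite group of linear
isometries are Lipschitz with the same constant: if `c̄ : I → V` is Lipschitz with constant
`L`, `c̃ : I → V` is continuous on the interval `I`, and for each `t ∈ I` there is `g ∈ G`
with `c̃ t = g • c̄ t`, then `c̃` is Lipschitz on `I` with constant `L`. -/
theorem stmt4 {V : Type*} [NormedAddCommGroup V] [InnerProductSpace ℝ V]
    [FiniteDimensional ℝ V]
    {G : Type*} [Group G] [Finite G] (ρ : G →* (V ≃ₗᵢ[ℝ] V))
    (I : Set ℝ) (hI : Convex ℝ I)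
    (L : ℝ≥0) (cbar ctil : ℝ → V)
    (hcbar : LipschitzOnWith L cbar I)
    (hctil : ContinuousOn ctil I)
    (hsel : ∀ t ∈ I, ∃ g : G, ctil t = ρ g (cbar t)) :
    LipschitzOnWith L ctil I := by
  classical
  have := Fintype.ofFinite G
  have hIcc : ∀ {a b : ℝ}, a ∈ I → b ∈ I → Set.Icc a b ⊆ I := fun ha hb =>
    hI.ordConnected.out ha hb
  -- Local step
  have key : ∀ t₀ ∈ I, ∃ δ > 0, ∀ s ∈ I, |s - t₀| < δ →
      dist (ctil s) (ctil t₀) ≤ L * |s - t₀| := by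
    intro t₀ ht₀
    obtain ⟨ε, hε, hεkey⟩ : ∃ ε > 0, ∀ g : G, ‖ρ g (cbar t₀) - ctil t₀‖ < ε →
        ρ g (cbar t₀) = ctil t₀ := by
      set s : Finset G := Finset.univ.filter (fun g => ρ g (cbar t₀) ≠ ctil t₀) with hs
      rcases s.eq_empty_or_nonempty with h | h
      · refine ⟨1, one_pos, fun g _ => ?_⟩
        by_contra hg
        have : g ∈ s := by simp [hs, hg]
        simp [h] at this
      · obtain ⟨g₀, hg₀, hmin⟩ := s.exists_min_image (fun g => ‖ρ g (cbar t₀) - ctil t₀‖) h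
        refine ⟨‖ρ g₀ (cbar t₀) - ctil t₀‖, ?_, fun g hg => ?_⟩
        · have hne : ρ g₀ (cbar t₀) ≠ ctil t₀ := by simpa [hs] using hg₀
          simpa [sub_eq_zero] using hne
        · by_contra hne
          have hgs : g ∈ s := by simp [hs, hne]
          exact (hmin g hgs).not_gt hg
    obtain ⟨δ₁, hδ₁, hδ₁key⟩ := Metric.continuousWithinAt_iff.mp (hctil t₀ ht₀) (ε / 2)
      (by positivity)
    set δ₂ : ℝ := ε / (2 * (L + 1)) with hδ₂def
    have hδ₂ : 0 < δ₂ := by positivity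
    refine ⟨min δ₁ δ₂, lt_min hδ₁ hδ₂, fun t ht hlt => ?_⟩
    obtain ⟨g, hg⟩ := hsel t ht
    have hcb : dist (cbar t) (cbar t₀) ≤ L * |t - t₀| := by
      simpa [Real.dist_eq] using hcbar.dist_le_mul t ht t₀ ht₀
    have hL2 : (L : ℝ) * |t - t₀| < ε / 2 := by
      have h1 : |t - t₀| < δ₂ := hlt.trans_le (min_le_right _ _)
      have h2 : (L : ℝ) * |t - t₀| ≤ (L + 1) * |t - t₀| := by
        apply mul_le_mul_of_nonneg_right _ (abs_nonneg _)
        linarith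
      have h3 : (L + 1 : ℝ) * |t - t₀| < (L + 1) * δ₂ := by
        apply mul_lt_mul_of_pos_left h1 (by positivity)
      have h4 : ((L : ℝ) + 1) * δ₂ = ε / 2 := by
        rw [hδ₂def]; field_simp
      linarith
    have hct : dist (ctil t) (ctil t₀) < ε / 2 := by
      apply hδ₁key ht
      simpa [Real.dist_eq] using hlt.trans_le (min_le_left _ _)
    have heq : ρ g (cbar t₀) = ctil t₀ := by
      apply hεkey
      have : ‖ρ g (cbar t₀) - ctil t₀‖ ≤ ‖ρ g (cbar t₀) - ρ g (cbar t)‖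
          + ‖ρ g (cbar t) - ctil t₀‖ := norm_sub_le_norm_sub_add_norm_sub _ _ _
      have h5 : ‖ρ g (cbar t₀) - ρ g (cbar t)‖ = dist (cbar t) (cbar t₀) := by
        rw [← map_sub, (ρ g).norm_map, ← dist_eq_norm, dist_comm]
      have h6 : ‖ρ g (cbar t) - ctil t₀‖ = dist (ctil t) (ctil t₀) := by
        rw [← hg, dist_eq_norm]
      rw [h5, h6] at this
      linarith
    calc dist (ctil t) (ctil t₀) = dist (ρ g (cbar t)) (ρ g (cbar t₀)) := by rw [hg, heq]
      _ = dist (cbar t) (cbar t₀) := (ρ g).isometry.dist_eq _ _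
      _ ≤ L * |t - t₀| := hcb
  -- Global step
  rw [lipschitzOnWith_iff_dist_le_mul]
  suffices H : ∀ a b, a ∈ I → b ∈ I → a ≤ b → dist (ctil a) (ctil b) ≤ L * (b - a) by
    intro x hx y hy
    rcases le_total x y with h | h
    · rw [Real.dist_eq, abs_of_nonpos (by linarith)]
      simpa using H x y hx hy h
    · rw [Real.dist_eq, abs_of_nonneg (by linarith), dist_comm]
      exact H y x hy hx h
  intro a b ha hb hab
  have hsub : Set.Icc a b ⊆ I := hIcc ha hb
  set S : Set ℝ := {u | u ∈ Set.Icc a b ∧ dist (ctil a) (ctil u) ≤ L * (u - a)} with hS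
  have haS : a ∈ S := ⟨⟨le_refl a, hab⟩, by simp⟩
  have hSbdd : BddAbove S := ⟨b, fun u hu => hu.1.2⟩
  have hSne : S.Nonempty := ⟨a, haS⟩
  have hclosed : IsClosed S := by
    have hcont : ContinuousOn (fun u => dist (ctil a) (ctil u) - L * (u - a)) (Set.Icc a b) :=
      (((continuous_const.dist continuous_id).comp_continuousOn (hctil.mono hsub))).sub
        (continuousOn_const.mul (continuousOn_id.sub continuousOn_const))
    have : S = Set.Icc a b ∩ (fun u => dist (ctil a) (ctil u) - L * (u - a)) ⁻¹' Set.Iic 0 := by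
      ext u
      simp only [hS, Set.mem_setOf_eq, Set.mem_inter_iff, Set.mem_preimage, Set.mem_Iic]
      constructor
      · rintro ⟨h1, h2⟩; exact ⟨h1, by linarith⟩
      · rintro ⟨h1, h2⟩; exact ⟨h1, by linarith⟩
    rw [this]
    exact hcont.preimage_isClosed_of_isClosed isClosed_Icc isClosed_Iic
  set m := sSup S with hm
  have hmS : m ∈ S := hclosed.csSup_mem hSne hSbdd
  have hmb : m = b := by
    by_contra hne
    have hmlt : m < b := lt_of_le_of_ne hmS.1.2 hne
    obtain ⟨δ, hδ, hδkey⟩ := key m (hsub hmS.1)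
    set u : ℝ := min b (m + δ / 2) with hu
    have hmu : m < u := lt_min hmlt (by linarith)
    have huIcc : u ∈ Set.Icc a b := ⟨le_trans hmS.1.1 hmu.le, min_le_left _ _⟩
    have humδ : |u - m| < δ := by
      rw [abs_of_nonneg (by linarith)]
      have : u ≤ m + δ / 2 := min_le_right _ _
      linarith
    have hdu : dist (ctil u) (ctil m) ≤ L * (u - m) := by
      have := hδkey u (hsub huIcc) humδ
      rwa [abs_of_nonneg (by linarith)] at this
    have huS : u ∈ S := by
      refine ⟨huIcc, ?_⟩
      calc dist (ctil a) (ctil u) ≤ dist (ctil a) (ctil m) + dist (ctil m) (ctil u) :=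
            dist_triangle _ _ _
        _ ≤ L * (m - a) + L * (u - m) := by
            rw [dist_comm (ctil m)]; exact add_le_add hmS.2 hdu
        _ = L * (u - a) := by ring
    exact absurd (le_csSup hSbdd huS) hmu.not_ge
  rw [← hmb]
  exact hmS.2
end

section
/- Let G be a compact group acting by linear isometries on a finite-dimensional real inner product space V, and suppose σ₁(v) = ‖v‖² is one of the components of the orbit map σ. Let I₀ ⊆ ℝ be an interval and c : I₀ → ℝⁿ continuous with c(I₀) ⊆ σ(V). Suppose that for each t₀ in I₀ with c₁(t₀) ≠ 0 there exist a neighborhood I_{t₀} of t₀ in {t ∈ I₀ : c₁(t) ≠ 0} and a lift c̄_{t₀} : I_{t₀} → V of c (i.e., σ ∘ c̄_{t₀} = c on I_{t₀}) which is Lipschitz with constant at most L, uniformly in t₀. Then there exists a lift c̄ : I₀ → V of c which is Lipschitz on I₀ with constant at most L. -/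
/-!
Isometries preserving `σ` act transitively on its fibres, so two local lifts can be matched at a
point and glued. By continuation this gives an `L`-Lipschitz lift on every compact interval of
`{c₁ ≠ 0}`, and by exhaustion on every connected component of it. Near a zero `z` of `c₁`,
any lift `v` of `c t` has `‖v‖ ≤ L |t - z|`: continue a lift from `t` towards the nearest zero,
where its norm `√c₁` tends to `0`. Hence the componentwise lifts, extended by `0` on the zeros,
form a global `L`-Lipschitz lift.
-/

open Set Topology
open scoped NNReal

theorem exists_eqOn_of_eqOn_succ {α β : Type*} {K : ℕ → Set α} (hK : Monotone K)
    {F : ℕ → α → β} (hF : ∀ k, EqOn (F (k + 1)) (F k) (K k)) : ∃ f, ∀ k, EqOn f (F k) (K k) := by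
  have hle : ∀ k m, k ≤ m → EqOn (F m) (F k) (K k) := by
    intro k m hkm
    induction m, hkm using Nat.le_induction with
    | base => exact eqOn_refl _ _
    | succ m hkm ih => exact ((hF m).mono (hK hkm)).trans ih
  classical
  refine ⟨fun x => if h : ∃ k, x ∈ K k then F h.choose x else F 0 x, fun k x hx => ?_⟩
  have h : ∃ k, x ∈ K k := ⟨k, hx⟩
  simp only [dif_pos h]
  exact ((hle _ _ (le_max_left _ k) h.choose_spec).symm).trans (hle _ _ (le_max_right _ k) hx)

theorem Set.Nonempty.exists_seq_forall_exists_le_ge {C : Set ℝ} (hC : C.Nonempty) :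
    ∃ p : ℕ → ℝ, (∀ k, p k ∈ C) ∧ ∀ t ∈ C, (∃ i, p i ≤ t) ∧ ∃ j, t ≤ p j := by
  have : Nonempty C := hC.to_subtype
  obtain ⟨D, hDc, hDd, hbot, htop⟩ := exists_countable_dense_bot_top C
  obtain ⟨q, rfl⟩ := hDc.exists_eq_range hDd.nonempty
  refine ⟨fun k => q k, fun k => (q k).2, fun t ht => ⟨?_, ?_⟩⟩
  · obtain ⟨_, ⟨i, rfl⟩, hi⟩ := hDd.exists_le' hbot ⟨t, ht⟩
    exact ⟨i, hi⟩
  · obtain ⟨_, ⟨j, rfl⟩, hj⟩ := hDd.exists_ge' htop ⟨t, ht⟩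
    exact ⟨j, hj⟩

theorem Set.OrdConnected.exists_Icc_exhaustion {C : Set ℝ} (hC : C.OrdConnected)
    (hne : C.Nonempty) :
    ∃ A B : ℕ → ℝ, Antitone A ∧ Monotone B ∧ (∀ k, A k ≤ B k) ∧
      (∀ k, Icc (A k) (B k) ⊆ C) ∧ C ⊆ ⋃ k, Icc (A k) (B k) := by
  obtain ⟨p, hpC, hp⟩ := hne.exists_seq_forall_exists_le_ge
  have hr : ∀ k, (Finset.range (k + 1)).Nonempty := fun _ => Finset.nonempty_range_add_one
  have hsub : ∀ {i k}, i ≤ k → Finset.range (i + 1) ⊆ Finset.range (k + 1) := fun h =>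
    Finset.range_subset_range.2 (by omega)
  have hmem : ∀ {i k}, i ≤ k → i ∈ Finset.range (k + 1) := fun h => Finset.mem_range.2 (by omega)
  refine ⟨fun k => (Finset.range (k + 1)).inf' (hr k) p,
    fun k => (Finset.range (k + 1)).sup' (hr k) p,
    fun i k h => Finset.inf'_mono p (hsub h) (hr i),
    fun i k h => Finset.sup'_mono p (hsub h) (hr i),
    fun k => (Finset.inf'_le p (hmem k.zero_le)).trans (Finset.le_sup' p (hmem k.zero_le)),
    fun k => ?_, fun t ht => ?_⟩
  · obtain ⟨i, -, hi⟩ := Finset.exists_mem_eq_inf' (hr k) p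
    obtain ⟨j, -, hj⟩ := Finset.exists_mem_eq_sup' (hr k) p
    exact hC.out (by simpa only [hi] using hpC i) (by simpa only [hj] using hpC j)
  · obtain ⟨⟨i, hi⟩, j, hj⟩ := hp t ht
    exact mem_iUnion.2 ⟨max i j, (Finset.inf'_le p (hmem (le_max_left i j))).trans hi,
      hj.trans (Finset.le_sup' p (hmem (le_max_right i j)))⟩

theorem LipschitzOnWith.Icc_union {V : Type*} [PseudoMetricSpace V] {L : ℝ≥0} {f : ℝ → V}
    {a b d : ℝ} (hab : a ≤ b) (hbd : b ≤ d) (h₁ : LipschitzOnWith L f (Icc a b))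
    (h₂ : LipschitzOnWith L f (Icc b d)) : LipschitzOnWith L f (Icc a d) := by
  have key : ∀ x ∈ Icc a d, ∀ y ∈ Icc a d, x ≤ y → dist (f x) (f y) ≤ L * dist x y := by
    intro x hx y hy hxy
    by_cases hyb : y ≤ b
    · exact h₁.dist_le_mul x ⟨hx.1, hxy.trans hyb⟩ y ⟨hy.1, hyb⟩
    by_cases hbx : b ≤ x
    · exact h₂.dist_le_mul x ⟨hbx, hx.2⟩ y ⟨hbx.trans hxy, hy.2⟩
    push Not at hyb hbx
    calc dist (f x) (f y) ≤ dist (f x) (f b) + dist (f b) (f y) := dist_triangle _ _ _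
      _ ≤ L * dist x b + L * dist b y := add_le_add
          (h₁.dist_le_mul x ⟨hx.1, hbx.le⟩ b ⟨hab, le_rfl⟩)
          (h₂.dist_le_mul b ⟨le_rfl, hbd⟩ y ⟨hyb.le, hy.2⟩)
      _ = L * dist x y := by
          rw [← mul_add, dist_add_dist_of_mem_segment]
          rw [segment_eq_Icc hxy]
          exact ⟨hbx.le, hyb.le⟩
  refine LipschitzOnWith.of_dist_le_mul fun x hx y hy => ?_
  rcases le_total x y with hxy | hyx
  · exact key x hx y hy hxy
  · rw [dist_comm, dist_comm x]; exact key y hy x hx hyx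

section Lift

variable {α V E : Type*} [PseudoEMetricSpace α] [PseudoEMetricSpace V]

structure IsLipschitzLiftOn (σ : V → E) (c : α → E) (L : ℝ≥0) (f : α → V) (s : Set α) : Prop where
  eqOn : EqOn (σ ∘ f) c s
  lipschitzOnWith : LipschitzOnWith L f s

def IsFiberTransitive (σ : V → E) : Prop :=
  ∀ v w, σ v = σ w → ∃ T : V ≃ᵢ V, σ ∘ T = σ ∧ T w = v

def HasLocalLipschitzLifts (σ : V → E) (c : α → E) (L : ℝ≥0) (S : Set α) : Prop :=
  ∀ t ∈ S, ∃ U ∈ 𝓝 t, ∃ g, IsLipschitzLiftOn σ c L g (U ∩ S)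

variable {σ : V → E} {c : α → E} {L : ℝ≥0} {f g : α → V} {s t : Set α}

namespace IsLipschitzLiftOn

theorem mono (hf : IsLipschitzLiftOn σ c L f s) (hts : t ⊆ s) : IsLipschitzLiftOn σ c L f t :=
  ⟨hf.eqOn.mono hts, hf.lipschitzOnWith.mono hts⟩

theorem congr (hf : IsLipschitzLiftOn σ c L f s) (hfg : EqOn f g s) :
    IsLipschitzLiftOn σ c L g s where
  eqOn x hx := by simp only [Function.comp_apply, ← hfg hx]; exact hf.eqOn hx
  lipschitzOnWith x hx y hy := by rw [← hfg hx, ← hfg hy]; exact hf.lipschitzOnWith hx hy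

theorem isometryEquiv_comp (hf : IsLipschitzLiftOn σ c L f s) {T : V ≃ᵢ V} (hT : σ ∘ T = σ) :
    IsLipschitzLiftOn σ c L (T ∘ f) s where
  eqOn x hx := by simp only [Function.comp_apply, ← hf.eqOn hx, ← congrFun hT (f x)]
  lipschitzOnWith := by simpa using T.isometry.lipschitz.comp_lipschitzOnWith hf.lipschitzOnWith

theorem exists_apply_eq (hσ : IsFiberTransitive σ) (hf : IsLipschitzLiftOn σ c L f s) {x : α}
    (hx : x ∈ s) {v : V} (hv : σ v = c x) : ∃ f', IsLipschitzLiftOn σ c L f' s ∧ f' x = v := by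
  obtain ⟨T, hT, hTx⟩ := hσ v (f x) (hv.trans (hf.eqOn hx).symm)
  exact ⟨T ∘ f, hf.isometryEquiv_comp hT, hTx⟩

end IsLipschitzLiftOn

theorem IsLipschitzLiftOn.iUnion {K : ℕ → Set α} (hK : Monotone K)
    (hf : ∀ k, IsLipschitzLiftOn σ c L f (K k)) : IsLipschitzLiftOn σ c L f (⋃ k, K k) where
  eqOn x hx := by
    obtain ⟨k, hk⟩ := mem_iUnion.1 hx
    exact (hf k).eqOn hk
  lipschitzOnWith x hx y hy := by
    obtain ⟨i, hi⟩ := mem_iUnion.1 hx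
    obtain ⟨j, hj⟩ := mem_iUnion.1 hy
    exact (hf (max i j)).lipschitzOnWith (hK (le_max_left i j) hi) (hK (le_max_right i j) hj)

theorem exists_isLipschitzLiftOn_iUnion {K : ℕ → Set α} (hK : Monotone K)
    (h₀ : ∃ f, IsLipschitzLiftOn σ c L f (K 0))
    (hstep : ∀ k f, IsLipschitzLiftOn σ c L f (K k) →
      ∃ f', IsLipschitzLiftOn σ c L f' (K (k + 1)) ∧ EqOn f' f (K k)) :
    ∃ f, IsLipschitzLiftOn σ c L f (⋃ k, K k) := by
  obtain ⟨f₀, hf₀⟩ := h₀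
  choose! step hstep using hstep
  let F : ℕ → α → V := fun k => Nat.rec f₀ step k
  have hF : ∀ k, IsLipschitzLiftOn σ c L (F k) (K k) := fun k => by
    induction k with
    | zero => exact hf₀
    | succ k ih => exact (hstep k _ ih).1
  obtain ⟨f, hf⟩ := exists_eqOn_of_eqOn_succ (F := F) hK fun k => (hstep k _ (hF k)).2
  exact ⟨f, IsLipschitzLiftOn.iUnion hK fun k => (hF k).congr (hf k).symm⟩

end Lift

section Interval

variable {V E : Type*} [PseudoMetricSpace V] {σ : V → E} {c : ℝ → E} {L : ℝ≥0} {S : Set ℝ}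
  {f g : ℝ → V} {a b d : ℝ}

namespace IsLipschitzLiftOn

theorem piecewise_Icc (hf : IsLipschitzLiftOn σ c L f (Icc a b))
    (hg : IsLipschitzLiftOn σ c L g (Icc b d)) (hab : a ≤ b) (hbd : b ≤ d) (hfg : f b = g b) :
    IsLipschitzLiftOn σ c L (fun t => if t ≤ b then f t else g t) (Icc a d) := by
  have h₁ : IsLipschitzLiftOn σ c L (fun t => if t ≤ b then f t else g t) (Icc a b) :=
    hf.congr fun t ht => (if_pos ht.2).symm
  have h₂ : IsLipschitzLiftOn σ c L (fun t => if t ≤ b then f t else g t) (Icc b d) := by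
    refine hg.congr fun t ht => ?_
    by_cases htb : t ≤ b
    · simp [le_antisymm htb ht.1, hfg]
    · exact (if_neg htb).symm
  refine ⟨fun t ht => ?_, h₁.lipschitzOnWith.Icc_union hab hbd h₂.lipschitzOnWith⟩
  rcases le_total t b with htb | hbt
  exacts [h₁.eqOn ⟨ht.1, htb⟩, h₂.eqOn ⟨hbt, ht.2⟩]

theorem exists_extend_right (hσ : IsFiberTransitive σ) (hf : IsLipschitzLiftOn σ c L f (Icc a b))
    (hg : IsLipschitzLiftOn σ c L g (Icc b d)) (hab : a ≤ b) (hbd : b ≤ d) :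
    ∃ h, IsLipschitzLiftOn σ c L h (Icc a d) ∧ EqOn h f (Icc a b) := by
  obtain ⟨g', hg', hg'b⟩ := hg.exists_apply_eq hσ ⟨le_rfl, hbd⟩ (hf.eqOn ⟨hab, le_rfl⟩)
  exact ⟨_, hf.piecewise_Icc hg' hab hbd hg'b.symm, fun t ht => if_pos ht.2⟩

theorem exists_extend_left (hσ : IsFiberTransitive σ) (hg : IsLipschitzLiftOn σ c L g (Icc a b))
    (hf : IsLipschitzLiftOn σ c L f (Icc b d)) (hab : a ≤ b) (hbd : b ≤ d) :
    ∃ h, IsLipschitzLiftOn σ c L h (Icc a d) ∧ EqOn h f (Icc b d) := by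
  obtain ⟨g', hg', hg'b⟩ := hg.exists_apply_eq hσ ⟨hab, le_rfl⟩ (hf.eqOn ⟨le_rfl, hbd⟩)
  refine ⟨_, hg'.piecewise_Icc hf hab hbd hg'b, fun t ht => ?_⟩
  by_cases htb : t ≤ b
  · simp [le_antisymm htb ht.1, hg'b]
  · exact if_neg htb

end IsLipschitzLiftOn

theorem exists_isLipschitzLiftOn_Icc (hσ : IsFiberTransitive σ)
    (hloc : HasLocalLipschitzLifts σ c L S) (hab : a ≤ b) (hS : Icc a b ⊆ S) :
    ∃ f, IsLipschitzLiftOn σ c L f (Icc a b) := by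
  set T := {x ∈ Icc a b | ∃ f, IsLipschitzLiftOn σ c L f (Icc a x)}
  have haT : a ∈ T := by
    obtain ⟨U, hU, g, hg⟩ := hloc a (hS ⟨le_rfl, hab⟩)
    refine ⟨⟨le_rfl, hab⟩, g, hg.mono ?_⟩
    rw [Icc_self, singleton_subset_iff]
    exact ⟨mem_of_mem_nhds hU, hS ⟨le_rfl, hab⟩⟩
  have hTb : BddAbove T := ⟨b, fun x hx => hx.1.2⟩
  -- a local lift at `x₀ = sup T` pushes `T` beyond `x₀`, unless `x₀ = b`
  set x₀ := sSup T
  have hx₀ : x₀ ∈ Icc a b := ⟨le_csSup hTb haT, csSup_le ⟨a, haT⟩ fun x hx => hx.1.2⟩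
  obtain ⟨U, hU, g, hg⟩ := hloc x₀ (hS hx₀)
  obtain ⟨ε, hε, hεU⟩ := Metric.mem_nhds_iff.1 hU
  obtain ⟨x, ⟨hx, f, hf⟩, hx₀x⟩ := exists_lt_of_lt_csSup ⟨a, haT⟩ (sub_lt_self x₀ hε)
  set y := min b (x₀ + ε / 2)
  have hxy : x ≤ y := le_min hx.2 (by linarith [le_csSup hTb ⟨hx, f, hf⟩])
  have hyT : y ∈ T := by
    have hsub : Icc x y ⊆ U ∩ S := fun u hu => by
      refine ⟨hεU ?_, hS ⟨hx.1.trans hu.1, hu.2.trans (min_le_left _ _)⟩⟩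
      rw [Metric.mem_ball, Real.dist_eq, abs_lt]
      constructor <;> linarith [hu.1, hu.2.trans (min_le_right b (x₀ + ε / 2))]
    obtain ⟨h, hh, -⟩ := hf.exists_extend_right hσ (hg.mono hsub) hx.1 hxy
    exact ⟨⟨hx.1.trans hxy, min_le_left _ _⟩, h, hh⟩
  have hyb : y = b := by
    refine min_eq_left (not_lt.1 fun hlt => ?_)
    have hy : y = x₀ + ε / 2 := min_eq_right hlt.le
    linarith [le_csSup hTb hyT]
  obtain ⟨-, f, hf⟩ := hyb ▸ hyT
  exact ⟨f, hf⟩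

theorem IsLipschitzLiftOn.exists_extend_Icc (hσ : IsFiberTransitive σ)
    (hloc : HasLocalLipschitzLifts σ c L S) {a' b' : ℝ}
    (hf : IsLipschitzLiftOn σ c L f (Icc a b)) (ha : a' ≤ a) (hab : a ≤ b) (hb : b ≤ b')
    (hS : Icc a' b' ⊆ S) : ∃ f', IsLipschitzLiftOn σ c L f' (Icc a' b') ∧ EqOn f' f (Icc a b) := by
  obtain ⟨g₁, hg₁⟩ := exists_isLipschitzLiftOn_Icc hσ hloc ha
    ((Icc_subset_Icc_right (hab.trans hb)).trans hS)
  obtain ⟨g₂, hg₂⟩ := exists_isLipschitzLiftOn_Icc hσ hloc hb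
    ((Icc_subset_Icc_left (ha.trans hab)).trans hS)
  obtain ⟨h₁, hh₁, e₁⟩ := hg₁.exists_extend_left hσ hf ha hab
  obtain ⟨h₂, hh₂, e₂⟩ := hh₁.exists_extend_right hσ hg₂ (ha.trans hab) hb
  exact ⟨h₂, hh₂, (e₂.mono (Icc_subset_Icc_left ha)).trans e₁⟩

theorem Set.OrdConnected.exists_isLipschitzLiftOn (hσ : IsFiberTransitive σ)
    (hloc : HasLocalLipschitzLifts σ c L S) {C : Set ℝ} (hC : C.OrdConnected) (hCS : C ⊆ S)
    (hne : C.Nonempty) : ∃ f : ℝ → V, IsLipschitzLiftOn σ c L f C := by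
  obtain ⟨A, B, hA, hB, hAB, hAB_C, hcover⟩ := hC.exists_Icc_exhaustion hne
  have hK : Monotone fun k => Icc (A k) (B k) := fun i k h => Icc_subset_Icc (hA h) (hB h)
  obtain ⟨f, hf⟩ := exists_isLipschitzLiftOn_iUnion hK
    (exists_isLipschitzLiftOn_Icc hσ hloc (hAB 0) ((hAB_C 0).trans hCS))
    fun k f hf => hf.exists_extend_Icc hσ hloc (hA k.le_succ) (hAB k) (hB k.le_succ)
      ((hAB_C (k + 1)).trans hCS)
  exact ⟨f, hf.mono hcover⟩

theorem exists_forall_isLipschitzLiftOn_connectedComponentIn [Nonempty V]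
    (hσ : IsFiberTransitive σ) (hloc : HasLocalLipschitzLifts σ c L S) :
    ∃ f : ℝ → V, ∀ t ∈ S, IsLipschitzLiftOn σ c L f (connectedComponentIn S t) := by
  -- one lift per component, not per point, so that `f` is coherent on each component
  choose! F hF using fun C (hC : C.OrdConnected) (hCS : C ⊆ S) (hne : C.Nonempty) =>
    hC.exists_isLipschitzLiftOn hσ hloc hCS hne
  refine ⟨fun t => F (connectedComponentIn S t) t, fun t ht => ?_⟩
  refine (hF _ isPreconnected_connectedComponentIn.ordConnected (connectedComponentIn_subset S t)
    ⟨t, mem_connectedComponentIn ht⟩).congr fun u hu => ?_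
  simp only [connectedComponentIn_eq hu]

end Interval

section Norm

variable {V E : Type*} {σ : V → E} {c : ℝ → E} {L : ℝ≥0} {I : Set ℝ} {ν : ℝ → ℝ}

theorem norm_le_mul_dist_of_eq_zero [SeminormedAddCommGroup V] (hσ : IsFiberTransitive σ)
    (hI : I.OrdConnected) (hν : ContinuousOn ν I)
    (hnorm : ∀ t ∈ I, ∀ v, σ v = c t → ‖v‖ ^ 2 = ν t)
    (hloc : HasLocalLipschitzLifts σ c L {t ∈ I | ν t ≠ 0}) {t z : ℝ} (ht : t ∈ I) (hz : z ∈ I)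
    (hνz : ν z = 0) {v : V} (hv : σ v = c t) : ‖v‖ ≤ L * dist t z := by
  by_cases hνt : ν t = 0
  · have : ‖v‖ = 0 := by simpa [hνt] using hnorm t ht v hv
    rw [this]; positivity
  have htz : uIcc t z ⊆ I := hI.uIcc_subset ht hz
  have hZ : IsCompact (uIcc t z ∩ ν ⁻¹' {0}) := isCompact_uIcc.of_isClosed_subset
    ((hν.mono htz).preimage_isClosed_of_isClosed isCompact_uIcc.isClosed isClosed_singleton)
    inter_subset_left
  -- `z₀` is the zero of `ν` closest to `t`, so `ν ≠ 0` strictly between `t` and `z₀`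
  obtain ⟨z₀, ⟨hz₀, hνz₀ : ν z₀ = 0⟩, hmin⟩ := hZ.exists_isMinOn ⟨z, right_mem_uIcc, hνz⟩
    (f := fun u => dist u t) (by fun_prop)
  have hz₀I : z₀ ∈ I := htz hz₀
  have htz₀ : t ≠ z₀ := fun h => hνt (h ▸ hνz₀)
  have hseg : openSegment ℝ t z₀ ⊆ uIcc t z₀ :=
    (openSegment_subset_segment ℝ t z₀).trans (segment_eq_uIcc t z₀).le
  have hbound : ∀ u ∈ openSegment ℝ t z₀, ‖v‖ ≤ √(ν u) + L * dist t u := by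
    intro u hu
    have hut : dist u t < dist z₀ t := by
      rw [openSegment_eq_Ioo' htz₀] at hu
      rw [Real.dist_eq, Real.dist_eq]
      rcases le_total t z₀ with h | h
      · rw [min_eq_left h, max_eq_right h] at hu
        rw [abs_of_pos (by linarith [hu.1]), abs_of_nonneg (by linarith)]; linarith [hu.2]
      · rw [min_eq_right h, max_eq_left h] at hu
        rw [abs_of_neg (by linarith [hu.2]), abs_of_nonpos (by linarith)]; linarith [hu.1]
    have hsub : uIcc t u ⊆ uIcc t z := uIcc_subset_uIcc left_mem_uIcc
      (uIcc_subset_uIcc left_mem_uIcc hz₀ (hseg hu))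
    have hS : uIcc t u ⊆ {w ∈ I | ν w ≠ 0} := fun w hw => by
      refine ⟨htz (hsub hw), fun hνw => ?_⟩
      have hwt : |w - t| ≤ |u - t| := abs_sub_left_of_mem_uIcc hw
      have hz₀w : dist z₀ t ≤ dist w t := hmin ⟨hsub hw, hνw⟩
      simp only [Real.dist_eq] at hz₀w hut
      linarith
    obtain ⟨f, hf⟩ := exists_isLipschitzLiftOn_Icc hσ hloc min_le_max hS
    obtain ⟨f, hf, hft⟩ := hf.exists_apply_eq hσ left_mem_uIcc hv
    have hfu : ‖f u‖ = √(ν u) := by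
      rw [← hnorm u (htz (hsub right_mem_uIcc)) (f u) (hf.eqOn right_mem_uIcc),
        Real.sqrt_sq (norm_nonneg _)]
    calc ‖v‖ ≤ ‖f u‖ + ‖v - f u‖ := norm_le_norm_add_norm_sub' v (f u)
      _ ≤ √(ν u) + L * dist t u := by
        rw [hfu, ← dist_eq_norm, ← hft]
        exact add_le_add_right (hf.lipschitzOnWith.dist_le_mul t left_mem_uIcc u right_mem_uIcc) _
  have hlim : ‖v‖ ≤ √(ν z₀) + L * dist t z₀ := ContinuousWithinAt.closure_le
    (segment_subset_closure_openSegment (right_mem_segment ℝ t z₀)) continuousWithinAt_const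
    (((hν z₀ hz₀I).mono (hseg.trans (hI.uIcc_subset ht hz₀I))).sqrt.add
      (by fun_prop : Continuous fun u => L * dist t u).continuousWithinAt) hbound
  rw [hνz₀, Real.sqrt_zero, zero_add] at hlim
  calc ‖v‖ ≤ L * dist t z₀ := hlim
    _ ≤ L * dist t z := by
      rw [dist_comm t, dist_comm t]
      exact mul_le_mul_of_nonneg_left (hmin ⟨right_mem_uIcc, hνz⟩) L.coe_nonneg

theorem exists_isLipschitzLiftOn_of_hasLocalLipschitzLifts [NormedAddCommGroup V]
    (hσ : IsFiberTransitive σ) (hI : I.OrdConnected) (hν : ContinuousOn ν I)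
    (hnorm : ∀ t ∈ I, ∀ v, σ v = c t → ‖v‖ ^ 2 = ν t) (hrange : ∀ t ∈ I, ∃ v, σ v = c t)
    (hloc : HasLocalLipschitzLifts σ c L {t ∈ I | ν t ≠ 0}) :
    ∃ f : ℝ → V, IsLipschitzLiftOn σ c L f I := by
  classical
  set S := {t ∈ I | ν t ≠ 0}
  obtain ⟨f, hf⟩ := exists_forall_isLipschitzLiftOn_connectedComponentIn hσ hloc
  set F : ℝ → V := fun t => if t ∈ S then f t else 0
  have hF : EqOn (σ ∘ F) c I := by
    intro t ht
    by_cases htS : t ∈ S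
    · simpa [F, htS] using (hf t htS).eqOn (mem_connectedComponentIn htS)
    · obtain ⟨v, hv⟩ := hrange t ht
      have hv0 : v = 0 := by
        have hνt : ν t = 0 := by_contra fun h => htS ⟨ht, h⟩
        simpa [hνt] using hnorm t ht v hv
      simp [F, htS, ← hv, hv0]
  refine ⟨F, hF, LipschitzOnWith.of_dist_le_mul fun s hs t ht => ?_⟩
  by_cases hst : uIcc s t ⊆ S
  · have hsS := hst left_mem_uIcc
    have htS := hst right_mem_uIcc
    have hcomp := isPreconnected_uIcc.subset_connectedComponentIn left_mem_uIcc hst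
    simpa [F, hsS, htS] using (hf s hsS).lipschitzOnWith.dist_le_mul s (hcomp left_mem_uIcc) t
      (hcomp right_mem_uIcc)
  · obtain ⟨z, hz, hzS⟩ := not_subset.1 hst
    have hzI := hI.uIcc_subset hs ht hz
    have hνz : ν z = 0 := by_contra fun h => hzS ⟨hzI, h⟩
    calc dist (F s) (F t) ≤ ‖F s‖ + ‖F t‖ := dist_le_norm_add_norm _ _
      _ ≤ L * dist s z + L * dist t z := add_le_add
          (norm_le_mul_dist_of_eq_zero hσ hI hν hnorm hloc hs hzI hνz (hF hs))
          (norm_le_mul_dist_of_eq_zero hσ hI hν hnorm hloc ht hzI hνz (hF ht))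
      _ = L * dist s t := by
        rw [← mul_add, dist_comm t, dist_add_dist_of_mem_segment (by rwa [segment_eq_uIcc])]

end Norm

theorem stmt5_general {V : Type*} [NormedAddCommGroup V] [InnerProductSpace ℝ V]
    {G : Type*} [Group G]
    (ρ : G →* (V ≃ₗᵢ[ℝ] V))
    (n : ℕ) (hn : 0 < n) (σ : V → Fin n → ℝ)
    (hinv : ∀ (g : G) (v : V), σ (ρ g v) = σ v)
    (hsep : ∀ v w : V, σ v = σ w → ∃ g : G, ρ g w = v)
    (hσ1 : ∀ v : V, σ v ⟨0, hn⟩ = ‖v‖ ^ 2)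
    (I₀ : Set ℝ) (hI₀ : Convex ℝ I₀)
    (c : ℝ → Fin n → ℝ) (hc : ContinuousOn c I₀)
    (hrange : ∀ t ∈ I₀, ∃ v : V, σ v = c t)
    (L : ℝ≥0)
    (hloc : ∀ t₀ ∈ I₀, c t₀ ⟨0, hn⟩ ≠ 0 →
      ∃ U : Set ℝ, IsOpen U ∧ t₀ ∈ U ∧
        ∃ cl : ℝ → V,
          (∀ t ∈ U ∩ {t ∈ I₀ | c t ⟨0, hn⟩ ≠ 0}, σ (cl t) = c t) ∧
          LipschitzOnWith L cl (U ∩ {t ∈ I₀ | c t ⟨0, hn⟩ ≠ 0})) :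
    ∃ cl : ℝ → V, (∀ t ∈ I₀, σ (cl t) = c t) ∧ LipschitzOnWith L cl I₀ := by
  have hσ : IsFiberTransitive σ := fun v w hvw => by
    obtain ⟨g, hg⟩ := hsep v w hvw
    exact ⟨(ρ g).toIsometryEquiv, funext (hinv g), hg⟩
  have hloc' : HasLocalLipschitzLifts σ c L {t ∈ I₀ | c t ⟨0, hn⟩ ≠ 0} := fun t ht => by
    obtain ⟨U, hU, htU, g, hg, hgL⟩ := hloc t ht.1 ht.2
    exact ⟨U, hU.mem_nhds htU, g, hg, hgL⟩
  obtain ⟨cl, hcl⟩ := exists_isLipschitzLiftOn_of_hasLocalLipschitzLifts hσ hI₀.ordConnected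
    ((continuous_apply _).comp_continuousOn hc) (fun t _ v hv => by rw [← hσ1, hv]; rfl) hrange
    hloc'
  exact ⟨cl, hcl.eqOn, hcl.lipschitzOnWith⟩

/-- Gluing local Lipschitz lifts: let a compact group `G` act by linear isometries on a
finite-dimensional real inner product space `V`, let `σ : V → ℝⁿ` be `G`-invariant,
orbit-separating, with first component `σ v 0 = ‖v‖²`. If `c : I₀ → ℝⁿ` is continuous with
values in `σ(V)` and near every `t₀ ∈ I₀` with `c₁ t₀ ≠ 0` there is a local lift of `c`
over `σ` (on a neighborhood of `t₀` in `{c₁ ≠ 0}`) that is Lipschitz with constant `L`,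
then `c` admits a lift on all of `I₀` that is Lipschitz with constant `L`. -/
theorem stmt5 {V : Type*} [NormedAddCommGroup V] [InnerProductSpace ℝ V]
    [FiniteDimensional ℝ V]
    {G : Type*} [Group G] [TopologicalSpace G] [IsTopologicalGroup G] [CompactSpace G]
    (ρ : G →* (V ≃ₗᵢ[ℝ] V))
    (n : ℕ) (hn : 0 < n) (σ : V → Fin n → ℝ)
    (hinv : ∀ (g : G) (v : V), σ (ρ g v) = σ v)
    (hsep : ∀ v w : V, σ v = σ w → ∃ g : G, ρ g w = v)
    (hσ1 : ∀ v : V, σ v ⟨0, hn⟩ = ‖v‖ ^ 2)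
    (I₀ : Set ℝ) (hI₀ : Convex ℝ I₀)
    (c : ℝ → Fin n → ℝ) (hc : ContinuousOn c I₀)
    (hrange : ∀ t ∈ I₀, ∃ v : V, σ v = c t)
    (L : ℝ≥0)
    (hloc : ∀ t₀ ∈ I₀, c t₀ ⟨0, hn⟩ ≠ 0 →
      ∃ U : Set ℝ, IsOpen U ∧ t₀ ∈ U ∧
        ∃ cl : ℝ → V,
          (∀ t ∈ U ∩ {t ∈ I₀ | c t ⟨0, hn⟩ ≠ 0}, σ (cl t) = c t) ∧
          LipschitzOnWith L cl (U ∩ {t ∈ I₀ | c t ⟨0, hn⟩ ≠ 0})) :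
    ∃ cl : ℝ → V, (∀ t ∈ I₀, σ (cl t) = c t) ∧ LipschitzOnWith L cl I₀ :=
  stmt5_general ρ n hn σ hinv hsep hσ1 I₀ hI₀ c hc hrange L hloc
end

section
/- Let p, m ∈ ℕ with p ≤ m and let I ⊆ ℝ be an open interval containing 0. Suppose g = (g₁, …, g_n) : I → ℂⁿ is such that each t ↦ t^p g_i(t) is of class C^m on I (i.e., g is a _pC^m-function), and suppose F is a C^m function on a neighborhood of g(0) in ℂⁿ (viewed as ℝ^{2n}). Then the composition F ∘ g is _pC^m, i.e., t ↦ t^p (F ∘ g)(t) is of class C^m near 0. -/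
/-!
Write `h = t^(p+1) g`. Hadamard's formula `g t = ∫₀¹ (t g)'(s t) ds` shows that dividing a
`C^(k+1)` function vanishing at `0` by `t` leaves a `C^k` function; hence `t^p g` is `C^(m-1)`
and `h' = t^p r` with `r` continuous. The derivative of `t^(p+1) F(g)` is
`(p+1) t^p F(g) + DF(g)(t^p r - (p+1) t^p g)`, a combination of functions `t^p Φ(G)` with
`Φ = F` or `Φ(x, y) = DF(x) y` and `G = g, (g, g), (g, r)`, all of which are `C^(m-1)` by
induction on `p`.
-/

open Set Filter Topology MeasureTheory

lemma ContinuousOn.inter_preimage_interior_mem_nhds {X Y : Type*} [TopologicalSpace X]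
    [TopologicalSpace Y] {f : X → Y} {s : Set X} {t : Set Y} {x : X} (hf : ContinuousOn f s)
    (hs : s ∈ 𝓝 x) (ht : t ∈ 𝓝 (f x)) : s ∩ f ⁻¹' interior t ∈ 𝓝 x :=
  inter_mem hs ((hf.continuousAt hs).preimage_mem_nhds (interior_mem_nhds.2 ht))

section Calculus

variable {E : Type*} [NormedAddCommGroup E] [NormedSpace ℝ E] {U : Set ℝ}

lemma contDiffOn_succ_of_hasDerivAt {f f' : ℝ → E} {k : ℕ} (hU : IsOpen U)
    (hf : ∀ t ∈ U, HasDerivAt f (f' t) t) (hf' : ContDiffOn ℝ k f' U) :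
    ContDiffOn ℝ (k + 1 : ℕ) f U := by
  rw [Nat.cast_succ, contDiffOn_succ_iff_deriv_of_isOpen hU]
  exact ⟨fun t ht => (hf t ht).differentiableAt.differentiableWithinAt, by simp,
    hf'.congr fun t ht => (hf t ht).deriv⟩

lemma hasDerivAt_id_smul_of_continuousAt {φ : ℝ → E} (hφ : ContinuousAt φ 0) :
    HasDerivAt (fun t => t • φ t) (φ 0) 0 := by
  rw [hasDerivAt_iff_tendsto_slope]
  refine (hφ.tendsto.mono_left nhdsWithin_le_nhds).congr' ?_
  filter_upwards [self_mem_nhdsWithin] with t ht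
  simp [slope, smul_smul, inv_mul_cancel₀ (show t ≠ 0 from ht)]

end Calculus

section Hadamard

variable {E : Type*} [NormedAddCommGroup E] [NormedSpace ℝ E] {U : Set ℝ}

noncomputable def unitClamp (s : ℝ) : ℝ := projIcc 0 1 zero_le_one s

lemma unitClamp_mem (s : ℝ) : unitClamp s ∈ Icc (0 : ℝ) 1 := Subtype.prop _

lemma unitClamp_of_mem {s : ℝ} (hs : s ∈ Icc (0 : ℝ) 1) : unitClamp s = s := by
  simp [unitClamp, projIcc_of_mem _ hs]

lemma continuous_unitClamp : Continuous unitClamp :=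
  continuous_subtype_val.comp continuous_projIcc

lemma StarConvex.unitClamp_mul_mem (hU : StarConvex ℝ 0 U) {t : ℝ} (ht : t ∈ U) (s : ℝ) :
    unitClamp s * t ∈ U :=
  hU.smul_mem ht (unitClamp_mem s).1 (unitClamp_mem s).2

/-- `hadamardIntegral c ψ t = ∫₀¹ s^c ψ(s t) ds`; the clamp changes nothing under the integral
but makes the integrand continuous in `(t, s)` on all of `U × ℝ`. -/
noncomputable def hadamardIntegral (c : ℕ) (ψ : ℝ → E) (t : ℝ) : E :=
  ∫ s in (0 : ℝ)..1, unitClamp s ^ c • ψ (unitClamp s * t)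

lemma continuousOn_hadamardIntegrand (hU : StarConvex ℝ 0 U) {ψ : ℝ → E}
    (hψ : ContinuousOn ψ U) (c : ℕ) :
    ContinuousOn (fun q : ℝ × ℝ => unitClamp q.2 ^ c • ψ (unitClamp q.2 * q.1)) (U ×ˢ univ) :=
  ((continuous_unitClamp.comp continuous_snd).pow c).continuousOn.smul <|
    hψ.comp ((continuous_unitClamp.comp continuous_snd).mul continuous_fst).continuousOn
      fun q hq => hU.unitClamp_mul_mem hq.1 q.2

lemma continuousOn_hadamardIntegral (hU : StarConvex ℝ 0 U) {ψ : ℝ → E}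
    (hψ : ContinuousOn ψ U) (c : ℕ) : ContinuousOn (hadamardIntegral c ψ) U := by
  rw [continuousOn_iff_continuous_domRestrict]
  have h := continuousOn_hadamardIntegrand hU hψ c
  exact intervalIntegral.continuous_parametric_intervalIntegral_of_continuous'
    (f := fun (t : U) s => unitClamp s ^ c • ψ (unitClamp s * t))
    (h.comp_continuous ((continuous_subtype_val.comp continuous_fst).prodMk continuous_snd)
      fun q => ⟨q.1.2, trivial⟩) 0 1

lemma hasDerivAt_hadamardIntegral (hUo : IsOpen U) (hU : StarConvex ℝ 0 U) {ψ : ℝ → E}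
    (hψ : ContDiffOn ℝ 1 ψ U) (c : ℕ) {t₀ : ℝ} (ht₀ : t₀ ∈ U) :
    HasDerivAt (hadamardIntegral c ψ) (hadamardIntegral (c + 1) (deriv ψ) t₀) t₀ := by
  have hψc := continuousOn_hadamardIntegrand hU hψ.continuousOn c
  have hψ'c :=
    continuousOn_hadamardIntegrand hU (hψ.continuousOn_deriv_of_isOpen hUo le_rfl) (c + 1)
  obtain ⟨ε, hε, hball⟩ := Metric.nhds_basis_closedBall.mem_iff.1 (hUo.mem_nhds ht₀)
  have hK : Metric.closedBall t₀ ε ×ˢ Icc (0 : ℝ) 1 ⊆ U ×ˢ univ :=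
    prod_mono hball (subset_univ _)
  obtain ⟨C, hC⟩ := ((isCompact_closedBall t₀ ε).prod isCompact_Icc).exists_bound_of_continuousOn
    (hψ'c.mono hK)
  have slice : ∀ {d : ℕ} {φ : ℝ → E},
      ContinuousOn (fun q : ℝ × ℝ => unitClamp q.2 ^ d • φ (unitClamp q.2 * q.1)) (U ×ˢ univ) →
      ∀ t ∈ U, Continuous fun s => unitClamp s ^ d • φ (unitClamp s * t) :=
    fun h t ht => h.comp_continuous (continuous_const.prodMk continuous_id) fun _ => ⟨ht, trivial⟩
  refine (intervalIntegral.hasDerivAt_integral_of_dominated_loc_of_deriv_le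
    (F := fun t s => unitClamp s ^ c • ψ (unitClamp s * t))
    (F' := fun t s => unitClamp s ^ (c + 1) • deriv ψ (unitClamp s * t)) (bound := fun _ => C)
    (Metric.ball_mem_nhds t₀ hε)
    (eventually_of_mem (hUo.mem_nhds ht₀) fun t ht => (slice hψc t ht).aestronglyMeasurable)
    ((slice hψc t₀ ht₀).intervalIntegrable _ _) (slice hψ'c t₀ ht₀).aestronglyMeasurable ?_
    intervalIntegrable_const ?_).2
  · refine Eventually.of_forall fun s hs t ht => hC (t, s) ⟨Metric.ball_subset_closedBall ht, ?_⟩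
    exact Ioc_subset_Icc_self (by simpa [zero_le_one] using hs)
  · refine Eventually.of_forall fun s _ t ht => ?_
    have hmem := hU.unitClamp_mul_mem (hball (Metric.ball_subset_closedBall ht)) s
    have hψd : HasDerivAt ψ (deriv ψ (unitClamp s * t)) (unitClamp s * t) :=
      ((hψ.differentiableOn one_ne_zero _ hmem).differentiableAt (hUo.mem_nhds hmem)).hasDerivAt
    convert (hψd.scomp t ((hasDerivAt_id t).const_mul (unitClamp s))).const_smul (unitClamp s ^ c)
      using 1
    · rfl
    · rw [smul_smul, mul_one, pow_succ]

lemma contDiffOn_hadamardIntegral (hUo : IsOpen U) (hU : StarConvex ℝ 0 U) (k : ℕ) :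
    ∀ (c : ℕ) {ψ : ℝ → E}, ContDiffOn ℝ k ψ U → ContDiffOn ℝ k (hadamardIntegral c ψ) U := by
  induction k with
  | zero =>
    intro c ψ hψ
    exact contDiffOn_zero.2 (continuousOn_hadamardIntegral hU (contDiffOn_zero.1 hψ) c)
  | succ k ih =>
    intro c ψ hψ
    exact contDiffOn_succ_of_hasDerivAt hUo
      (fun t ht => hasDerivAt_hadamardIntegral hUo hU (hψ.of_le (by simp)) c ht)
      (ih (c + 1) (hψ.deriv_of_isOpen hUo (by simp)))

lemma smul_hadamardIntegral_deriv [CompleteSpace E] (hUo : IsOpen U) (hU : StarConvex ℝ 0 U)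
    {q : ℝ → E} (hq : ContDiffOn ℝ 1 q U) {t : ℝ} (ht : t ∈ U) :
    t • hadamardIntegral 0 (deriv q) t = q t - q 0 := by
  rcases eq_or_ne t 0 with rfl | ht0
  · simp
  have hseg : uIcc 0 t ⊆ U := by
    simpa [segment_eq_uIcc] using hU.segment_subset ht
  have hftc : ∫ u in (0 : ℝ)..t, deriv q u = q t - q 0 :=
    intervalIntegral.integral_eq_sub_of_hasDerivAt
      (fun u hu => ((hq.differentiableOn one_ne_zero u (hseg hu)).differentiableAt
        (hUo.mem_nhds (hseg hu))).hasDerivAt)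
      ((hq.continuousOn_deriv_of_isOpen hUo le_rfl).mono hseg).intervalIntegrable
  have hclamp : hadamardIntegral 0 (deriv q) t = ∫ s in (0 : ℝ)..1, deriv q (s * t) := by
    refine intervalIntegral.integral_congr fun s hs => ?_
    rw [uIcc_of_le zero_le_one] at hs
    simp [unitClamp_of_mem hs]
  rw [hclamp, intervalIntegral.integral_comp_mul_right _ ht0, smul_smul, zero_mul, one_mul,
    hftc]
  simp [mul_inv_cancel₀ ht0]

lemma ContDiffOn.of_id_smul [CompleteSpace E] (hUo : IsOpen U) (hU : StarConvex ℝ 0 U) {k : ℕ}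
    {g : ℝ → E} (hq : ContDiffOn ℝ (k + 1 : ℕ) (fun t => t • g t) U) (hg : ContinuousOn g U) :
    ContDiffOn ℝ k g U := by
  refine (contDiffOn_hadamardIntegral hUo hU k 0 (hq.deriv_of_isOpen hUo le_rfl)).congr
    fun t ht => ?_
  rcases eq_or_ne t 0 with rfl | ht0
  · have hq0 := ((hq.differentiableOn (by simp) 0 ht).differentiableAt
      (hUo.mem_nhds ht)).hasDerivAt
    simp [hadamardIntegral, (hasDerivAt_id_smul_of_continuousAt
      (hg.continuousAt (hUo.mem_nhds ht))).unique hq0]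
  · have := smul_hadamardIntegral_deriv hUo hU (hq.of_le (by simp)) ht
    simp only [zero_smul, sub_zero] at this
    exact (smul_right_injective E ht0 this).symm

lemma ContDiffOn.of_pow_succ_smul [CompleteSpace E] (hUo : IsOpen U) (hU : StarConvex ℝ 0 U)
    {p k : ℕ} {g : ℝ → E} (h : ContDiffOn ℝ (k + 1 : ℕ) (fun t => t ^ (p + 1) • g t) U)
    (hg : ContinuousOn g U) : ContDiffOn ℝ k (fun t => t ^ p • g t) U :=
  (h.congr fun t _ => by simp [smul_smul, pow_succ']).of_id_smul hUo hU
    ((continuous_pow p).continuousOn.smul hg)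

end Hadamard

section Composition

variable {E E' : Type*} [NormedAddCommGroup E] [NormedSpace ℝ E]
  [NormedAddCommGroup E'] [NormedSpace ℝ E'] {U : Set ℝ}

lemma pow_succ_smul_eq_smul_pow_smul {M : Type*} [AddCommMonoid M] [Module ℝ M] (p : ℕ)
    (φ : ℝ → M) : (fun t : ℝ => t ^ (p + 1) • φ t) = fun t => t • (t ^ p • φ t) := by
  ext t
  rw [smul_smul, pow_succ']

lemma exists_deriv_pow_succ_smul_eq_pow_smul [CompleteSpace E] (hUo : IsOpen U)
    (hU : StarConvex ℝ 0 U) {p k : ℕ} (hpk : p ≤ k) {g : ℝ → E} (hg : ContinuousOn g U)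
    (h : ContDiffOn ℝ (k + 1 : ℕ) (fun t => t ^ (p + 1) • g t) U) :
    ∃ r : ℝ → E, ContinuousOn r U ∧
      ∀ t ∈ U, deriv (fun t => t ^ (p + 1) • g t) t = t ^ p • r t := by
  induction p generalizing k with
  | zero =>
    exact ⟨deriv _, h.continuousOn_deriv_of_isOpen hUo (by simp), fun t _ => by simp⟩
  | succ p ih =>
    obtain ⟨k, rfl⟩ : ∃ k', k = k' + 1 := ⟨k - 1, by omega⟩
    have hw : ContDiffOn ℝ (k + 1 : ℕ) (fun t => t ^ (p + 1) • g t) U :=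
      h.of_pow_succ_smul hUo hU hg
    obtain ⟨r, hrc, hr⟩ := ih (by omega) hw
    refine ⟨g + r, hg.add hrc, fun t ht => ?_⟩
    have hwd := ((hw.differentiableOn (by simp) t ht).differentiableAt
      (hUo.mem_nhds ht)).hasDerivAt
    have hd : HasDerivAt (fun t => t • (t ^ (p + 1) • g t)) _ t := (hasDerivAt_id' t).smul hwd
    rw [pow_succ_smul_eq_smul_pow_smul, hd.deriv, hr t ht]
    simp only [Pi.add_apply]
    module

lemma HasDerivAt.of_pow_succ_smul {p : ℕ} {g : ℝ → E} {v : E} {t₀ : ℝ} (ht₀ : t₀ ≠ 0)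
    (h : HasDerivAt (fun t => t ^ (p + 1) • g t) v t₀) :
    HasDerivAt g ((t₀ ^ (p + 1))⁻¹ • (v - (((p : ℝ) + 1) * t₀ ^ p) • g t₀)) t₀ := by
  have hev : (fun t => (t ^ (p + 1))⁻¹ • t ^ (p + 1) • g t) =ᶠ[𝓝 t₀] g := by
    filter_upwards [isOpen_ne.mem_nhds ht₀] with t ht
    rw [inv_smul_smul₀ (pow_ne_zero _ ht)]
  refine (((hasDerivAt_pow (p + 1) t₀).inv (pow_ne_zero _ ht₀)).smul h).congr_of_eventuallyEq
    hev.symm |>.congr_deriv ?_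
  have hpow : t₀ ^ (p + 1) ≠ 0 := pow_ne_zero _ ht₀
  have hc : -(((p + 1 : ℕ) : ℝ) * t₀ ^ p) / (t₀ ^ (p + 1)) ^ 2 * t₀ ^ (p + 1)
      = -((t₀ ^ (p + 1))⁻¹ * (((p : ℝ) + 1) * t₀ ^ p)) := by
    push_cast
    field_simp
  simp only [Pi.inv_apply, Nat.add_sub_cancel, smul_smul, hc]
  module

lemma HasDerivAt.pow_succ_smul_comp {p : ℕ} {g : ℝ → E} {F : E → E'} {L : E →L[ℝ] E'} {v : E}
    {t₀ : ℝ} (hh : HasDerivAt (fun t => t ^ (p + 1) • g t) v t₀) (hg : ContinuousAt g t₀)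
    (hF : HasFDerivAt F L (g t₀)) :
    HasDerivAt (fun t => t ^ (p + 1) • F (g t))
      ((((p : ℝ) + 1) * t₀ ^ p) • F (g t₀) + L (v - (((p : ℝ) + 1) * t₀ ^ p) • g t₀)) t₀ := by
  rcases eq_or_ne t₀ 0 with rfl | ht₀
  · have hv : v = (0 : ℝ) ^ p • g 0 := by
      rw [pow_succ_smul_eq_smul_pow_smul] at hh
      exact hh.unique
        (hasDerivAt_id_smul_of_continuousAt ((continuous_pow p).continuousAt.smul hg))
    rw [pow_succ_smul_eq_smul_pow_smul]
    convert hasDerivAt_id_smul_of_continuousAt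
      ((continuous_pow p).continuousAt.smul (hF.continuousAt.comp hg)) using 1
    · rfl
    rw [hv]
    cases p <;> simp
  · convert (hasDerivAt_pow (p + 1) t₀).smul (hF.comp_hasDerivAt t₀ (hh.of_pow_succ_smul ht₀))
      using 1
    · rfl
    rw [L.map_smul, smul_smul, mul_inv_cancel₀ (pow_ne_zero _ ht₀), one_smul]
    push_cast
    simp only [Function.comp_apply]
    abel

end Composition

theorem exists_nhds_contDiffOn_pow_smul_comp {E E' : Type*} [NormedAddCommGroup E]
    [NormedSpace ℝ E] [CompleteSpace E] [NormedAddCommGroup E'] [NormedSpace ℝ E']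
    {p m : ℕ} (hpm : p ≤ m) {U : Set ℝ} (hUo : IsOpen U) (hU : StarConvex ℝ 0 U)
    (h0 : (0 : ℝ) ∈ U) {g : ℝ → E} (hgc : ContinuousOn g U)
    (hg : ContDiffOn ℝ m (fun t => t ^ p • g t) U) {F : E → E'} {W : Set E}
    (hW : W ∈ 𝓝 (g 0)) (hF : ContDiffOn ℝ m F W) :
    ∃ V ∈ 𝓝 (0 : ℝ), ContDiffOn ℝ m (fun t => t ^ p • F (g t)) V := by
  induction p generalizing E m with
  | zero =>
    refine ⟨_, hgc.inter_preimage_interior_mem_nhds (hUo.mem_nhds h0) hW, ?_⟩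
    have hgs : ContDiffOn ℝ m g U := hg.congr fun t _ => by simp
    exact ((hF.mono interior_subset).comp (hgs.mono inter_subset_left) fun t ht => ht.2).congr
      fun t _ => by simp
  | succ p ih =>
    obtain ⟨m, rfl⟩ : ∃ m', m = m' + 1 := ⟨m - 1, by omega⟩
    have hw : ContDiffOn ℝ m (fun t => t ^ p • g t) U := hg.of_pow_succ_smul hUo hU hgc
    obtain ⟨r, hrc, hr⟩ := exists_deriv_pow_succ_smul_eq_pow_smul hUo hU (by omega) hgc hg
    have hrs : ContDiffOn ℝ m (fun t => t ^ p • r t) U :=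
      (hg.deriv_of_isOpen hUo le_rfl).congr fun t ht => (hr t ht).symm
    set DF : E × E → E' := fun q => fderiv ℝ F q.1 q.2
    have hDF : ContDiffOn ℝ m DF (interior W ×ˢ univ) :=
      (((hF.mono interior_subset).fderiv_of_isOpen isOpen_interior le_rfl).comp contDiffOn_fst
        fun q hq => hq.1).clm_apply contDiffOn_snd
    have hDFW : ∀ y : E, interior W ×ˢ univ ∈ 𝓝 (g 0, y) := fun y =>
      prod_mem_nhds (interior_mem_nhds.2 hW) univ_mem
    obtain ⟨V₁, hV₁, h₁⟩ := ih (by omega) hgc hw hW (hF.of_le (by simp))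
    obtain ⟨V₂, hV₂, h₂⟩ := ih (by omega) (hgc.prodMk hgc) (hw.prodMk hw) (hDFW _) hDF
    obtain ⟨V₃, hV₃, h₃⟩ := ih (by omega) (hgc.prodMk hrc) (hw.prodMk hrs) (hDFW _) hDF
    obtain ⟨V, hV, hVo, h0V⟩ := mem_nhds_iff.1 (inter_mem (inter_mem (inter_mem hV₁ hV₂) hV₃)
      (hgc.inter_preimage_interior_mem_nhds (hUo.mem_nhds h0) hW))
    refine ⟨V, hVo.mem_nhds h0V, contDiffOn_succ_of_hasDerivAt hVo (f' := fun t =>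
      ((p : ℝ) + 1) • (t ^ p • F (g t))
        + (t ^ p • DF (g t, r t) - ((p : ℝ) + 1) • (t ^ p • DF (g t, g t)))) ?_ ?_⟩
    · intro t ht
      obtain ⟨⟨⟨-, -⟩, -⟩, htU, htW⟩ := hV ht
      have hh := ((hg.differentiableOn (by simp) t htU).differentiableAt
        (hUo.mem_nhds htU)).hasDerivAt
      rw [hr t htU] at hh
      have hFd := ((hF.contDiffAt (mem_interior_iff_mem_nhds.1 htW)).differentiableAt
        (by simp)).hasFDerivAt
      convert hh.pow_succ_smul_comp (hgc.continuousAt (hUo.mem_nhds htU)) hFd using 1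
      simp only [DF, map_sub, map_smul, smul_smul]
    · have hV₁₂₃ : V ⊆ V₁ ∩ V₂ ∩ V₃ := hV.trans inter_subset_left
      exact ((h₁.mono fun t ht => (hV₁₂₃ ht).1.1).const_smul _).add
        ((h₃.mono fun t ht => (hV₁₂₃ ht).2).sub
          ((h₂.mono fun t ht => (hV₁₂₃ ht).1.2).const_smul _))

/-- Composition of `ₚC^m`-functions with `C^m` functions: let `p ≤ m`, let `I` be an open
interval around `0`, let `g : I → ℂⁿ` be continuous with `t ↦ t^p g t` of class `C^m` on
`I`, and let `F : ℂⁿ → ℂ` be `C^m` (over ℝ) on a neighborhood of `g 0`. Then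
`t ↦ t^p F(g t)` is `C^m` near `0`. -/
theorem stmt7 (p m n : ℕ) (hpm : p ≤ m)
    (a b : ℝ) (ha : a < 0) (hb : 0 < b)
    (g : ℝ → Fin n → ℂ) (hgc : ContinuousOn g (Ioo a b))
    (hg : ContDiffOn ℝ m (fun t : ℝ => (t : ℂ) ^ p • g t) (Ioo a b))
    (F : (Fin n → ℂ) → ℂ)
    (W : Set (Fin n → ℂ)) (hW : W ∈ nhds (g 0))
    (hF : ContDiffOn ℝ m F W) :
    ∃ U ∈ nhds (0 : ℝ),
      ContDiffOn ℝ m (fun t : ℝ => (t : ℂ) ^ p * F (g t)) U := by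
  have hg' : ContDiffOn ℝ m (fun t : ℝ => t ^ p • g t) (Ioo a b) :=
    hg.congr fun t _ => by rw [← Complex.ofReal_pow, Complex.coe_smul]
  obtain ⟨U, hU, hC⟩ := exists_nhds_contDiffOn_pow_smul_comp hpm isOpen_Ioo
    ((convex_Ioo a b).starConvex ⟨ha, hb⟩) ⟨ha, hb⟩ hgc hg' hW hF
  exact ⟨U, hU, hC.congr fun t _ => by rw [Complex.real_smul, Complex.ofReal_pow]⟩
end

section
/- Let p, m ∈ ℕ with p ≤ m, let I ⊆ ℝ be an open interval containing 0, and let f : I → ℂ be continuous. Then t ↦ t^p f(t) is of class C^m on I if and only if: (i) f is C^{m-p} on I, (ii) f restricted to I ∖ {0} is C^m, and (iii) for each 0 ≤ k ≤ p the limit lim_{t→0} t^k f^{(m-p+k)}(t) exists as a finite number. -/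
/-!
Multiplying by `t` trades one order of smoothness for one more weighted limit. By Leibniz,
`t^k (t w)^{(n+1+k)} = t^{k+1} w^{(n+k+1)} + (n+k+1) t^k w^{(n+k)}`, so the limit conditions for
`t w` at order `n + 1` are those for `w` at order `n`, shifted by one. If `w` is `C^n` and these
limits exist, then `(t w)^{(n+1)}` has a limit at `0`, so `t w` is `C^{n+1}` by the derivative
extension theorem. Conversely, if `u = t w` is `C^{k+1}` then `w` is `C^k`: off `0`,
`w^{(r)} = N_r / t^{r+1}` with `N_r' = t^r u^{(r+1)}` and `N_r(0) = 0`, so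
`w^{(r)}(t) → u^{(r+1)}(0) / (r+1)`. Peeling off the factors of `t^p` one at a time gives the
theorem.
-/

open Set Filter Topology Asymptotics

section IteratedDeriv

variable {𝕜 F : Type*} [NontriviallyNormedField 𝕜] [NormedAddCommGroup F] [NormedSpace 𝕜 F]
  {f : 𝕜 → F} {x : 𝕜} {n : WithTop ℕ∞} {m : ℕ}

theorem ContDiffAt.continuousAt_iteratedDeriv (hf : ContDiffAt 𝕜 n f x) (hm : m ≤ n) :
    ContinuousAt (iteratedDeriv m f) x := by
  rw [iteratedDeriv_eq_equiv_comp]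
  exact (LinearIsometryEquiv.continuous _).continuousAt.comp (hf.continuousAt_iteratedFDeriv hm)

theorem ContDiffAt.hasDerivAt_iteratedDeriv (hf : ContDiffAt 𝕜 n f x) (hm : m < n) :
    HasDerivAt (iteratedDeriv m f) (iteratedDeriv (m + 1) f x) x := by
  rw [iteratedDeriv_succ]
  refine DifferentiableAt.hasDerivAt ?_
  rw [iteratedDeriv_eq_equiv_comp]
  exact (LinearIsometryEquiv.differentiable _ _).comp x (hf.differentiableAt_iteratedFDeriv hm)

end IteratedDeriv

section Extension

variable {E : Type*} [NormedAddCommGroup E] [NormedSpace ℝ E]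

theorem hasDerivAt_of_tendsto_deriv_nhdsNE {v : ℝ → E} {s : Set ℝ} {x : ℝ} {L : E}
    (hs : s ∈ 𝓝 x) (hc : ContinuousAt v x) (hd : DifferentiableOn ℝ v (s \ {x}))
    (hlim : Tendsto (deriv v) (𝓝[≠] x) (𝓝 L)) : HasDerivAt v L x := by
  have right : HasDerivWithinAt v L (Ici x) x :=
    hasDerivWithinAt_Ici_of_tendsto_deriv (hd.mono fun y hy => ⟨hy.2, ne_of_gt hy.1⟩)
      hc.continuousWithinAt (inter_mem_nhdsWithin _ hs)
      (hlim.mono_left (nhdsWithin_mono _ fun y hy => ne_of_gt hy))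
  have left : HasDerivWithinAt v L (Iic x) x :=
    hasDerivWithinAt_Iic_of_tendsto_deriv (hd.mono fun y hy => ⟨hy.2, ne_of_lt hy.1⟩)
      hc.continuousWithinAt (inter_mem_nhdsWithin _ hs)
      (hlim.mono_left (nhdsWithin_mono _ fun y hy => ne_of_lt hy))
  simpa using left.union right

theorem contDiffOn_one_of_tendsto_deriv {v : ℝ → E} {s : Set ℝ} {x : ℝ} (hs : IsOpen s)
    (hv : ContinuousOn v s) (hv' : ContDiffOn ℝ 1 v (s \ {x}))
    (hlim : ∃ L, Tendsto (deriv v) (𝓝[≠] x) (𝓝 L)) : ContDiffOn ℝ 1 v s := by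
  have hs' : IsOpen (s \ {x}) := hs.sdiff isClosed_singleton
  obtain ⟨L, hL⟩ := hlim
  obtain ⟨hd', -, hderiv'⟩ := (contDiffOn_succ_iff_deriv_of_isOpen (n := 0) hs').mp hv'
  refine (contDiffOn_succ_iff_deriv_of_isOpen (n := 0) hs).mpr
    ⟨fun y hy => ?_, by simp, contDiffOn_zero.mpr fun y hy => ?_⟩
  all_goals rcases eq_or_ne y x with rfl | hyx
  · exact (hasDerivAt_of_tendsto_deriv_nhdsNE (hs.mem_nhds hy)
      (hv.continuousAt (hs.mem_nhds hy)) hd' hL).differentiableAt.differentiableWithinAt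
  · exact ((hd' y ⟨hy, hyx⟩).differentiableAt
      (hs'.mem_nhds ⟨hy, hyx⟩)).differentiableWithinAt
  · have h := (hasDerivAt_of_tendsto_deriv_nhdsNE (hs.mem_nhds hy)
      (hv.continuousAt (hs.mem_nhds hy)) hd' hL).deriv
    refine (continuousWithinAt_compl_self.mp ?_).continuousWithinAt
    rwa [ContinuousWithinAt, h]
  · exact ((hderiv'.continuousOn y ⟨hy, hyx⟩).continuousAt
      (hs'.mem_nhds ⟨hy, hyx⟩)).continuousWithinAt

theorem ContDiffOn.succ_of_tendsto_iteratedDeriv {v : ℝ → E} {s : Set ℝ} {x : ℝ} {n : ℕ}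
    (hs : IsOpen s) (hv : ContDiffOn ℝ n v s) (hv' : ContDiffOn ℝ (n + 1) v (s \ {x}))
    (hlim : ∃ L, Tendsto (iteratedDeriv (n + 1) v) (𝓝[≠] x) (𝓝 L)) :
    ContDiffOn ℝ (n + 1) v s := by
  induction n generalizing v with
  | zero =>
    rw [zero_add, iteratedDeriv_one] at hlim
    simpa using contDiffOn_one_of_tendsto_deriv hs hv.continuousOn (by simpa using hv') hlim
  | succ n ih =>
    rw [Nat.cast_succ] at hv hv' ⊢
    obtain ⟨hd, -, hderiv⟩ := (contDiffOn_succ_iff_deriv_of_isOpen hs).mp hv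
    obtain ⟨-, -, hderiv'⟩ :=
      (contDiffOn_succ_iff_deriv_of_isOpen (hs.sdiff isClosed_singleton)).mp hv'
    rw [iteratedDeriv_succ'] at hlim
    exact (contDiffOn_succ_iff_deriv_of_isOpen hs).mpr ⟨hd, by simp, ih hderiv hderiv' hlim⟩

end Extension

theorem iteratedDeriv_ofReal_mul {w : ℝ → ℂ} {t : ℝ} {r : ℕ}
    (hw : ContDiffAt ℝ (r + 1) w t) :
    iteratedDeriv (r + 1) (fun x : ℝ => (x : ℂ) * w x) t =
      t * iteratedDeriv (r + 1) w t + (r + 1) * iteratedDeriv r w t := by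
  have hderiv : deriv (fun x : ℝ => (x : ℂ)) = fun _ => 1 :=
    funext fun x => by simpa using ((hasDerivAt_id x).ofReal_comp).deriv
  have hlin (i : ℕ) :
      iteratedDeriv (i + 1) (fun x : ℝ => (x : ℂ)) = iteratedDeriv i fun _ => 1 := by
    rw [iteratedDeriv_succ', hderiv]
  have h := iteratedDeriv_mul (f := fun x : ℝ => (x : ℂ)) Complex.ofRealCLM.contDiff.contDiffAt
    (by exact_mod_cast hw)
  rw [Finset.sum_range_succ', Finset.sum_range_succ'] at h
  rw [add_comm ((t : ℂ) * _)]
  simpa [hlin, iteratedDeriv_const, Pi.mul_def] using h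

/-- Away from `0`, `(d/dt)^r (u t / t) = quotientDerivNumerator u r t / t ^ (r + 1)`. -/
noncomputable def quotientDerivNumerator (u : ℝ → ℂ) : ℕ → ℝ → ℂ
  | 0 => u
  | r + 1 => fun t => (t : ℂ) ^ (r + 1) * iteratedDeriv (r + 1) u t -
      (r + 1) * quotientDerivNumerator u r t

theorem quotientDerivNumerator_apply_zero {u : ℝ → ℂ} (hu : u 0 = 0) (r : ℕ) :
    quotientDerivNumerator u r 0 = 0 := by
  induction r with
  | zero => exact hu
  | succ r ih => simp [quotientDerivNumerator, ih]

theorem hasDerivAt_quotientDerivNumerator {u : ℝ → ℂ} {t : ℝ} {r : ℕ}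
    (hu : ContDiffAt ℝ (r + 1) u t) :
    HasDerivAt (quotientDerivNumerator u r) ((t : ℂ) ^ r * iteratedDeriv (r + 1) u t) t := by
  induction r with
  | zero =>
    have h := hu.hasDerivAt_iteratedDeriv (m := 0) (by simp)
    rw [iteratedDeriv_zero] at h
    simpa only [quotientDerivNumerator, pow_zero, one_mul] using h
  | succ r ih =>
    have hpow := (hasDerivAt_pow (r + 1) (t : ℂ)).comp_ofReal
    have hD := hu.hasDerivAt_iteratedDeriv (m := r + 1) (by norm_cast; omega)
    refine ((hpow.mul hD).sub ((ih (hu.of_le (by norm_cast; omega))).const_mul _)).congr_deriv ?_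
    push_cast
    ring

theorem iteratedDeriv_eq_quotientDerivNumerator_div {w : ℝ → ℂ} {s : Set ℝ} {r : ℕ}
    (hs : IsOpen s) (hu : ContDiffOn ℝ r (fun x : ℝ => (x : ℂ) * w x) s) {t : ℝ}
    (ht : t ∈ s \ {0}) :
    iteratedDeriv r w t =
      quotientDerivNumerator (fun x : ℝ => (x : ℂ) * w x) r t / (t : ℂ) ^ (r + 1) := by
  have hs' : IsOpen (s \ {0}) := hs.sdiff isClosed_singleton
  induction r generalizing t with
  | zero =>
    have : (t : ℂ) ≠ 0 := by exact_mod_cast ht.2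
    simp only [iteratedDeriv_zero, quotientDerivNumerator, zero_add, pow_one]
    field_simp
  | succ r ih =>
    have ht0 : (t : ℂ) ≠ 0 := by exact_mod_cast ht.2
    have hev : iteratedDeriv r w =ᶠ[𝓝 t] fun x =>
        quotientDerivNumerator (fun x : ℝ => (x : ℂ) * w x) r x / (x : ℂ) ^ (r + 1) :=
      eventually_of_mem (hs'.mem_nhds ht) fun x hx => ih (hu.of_le (by norm_cast; omega)) hx
    have hN := hasDerivAt_quotientDerivNumerator (hu.contDiffAt (hs.mem_nhds ht.1))
    rw [iteratedDeriv_succ, hev.deriv_eq,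
      (hN.fun_div (hasDerivAt_pow (r + 1) (t : ℂ)).comp_ofReal (pow_ne_zero _ ht0)).deriv]
    simp only [quotientDerivNumerator]
    field_simp
    push_cast
    ring

theorem tendsto_div_pow_succ_of_hasDerivAt {F G : ℝ → ℂ} {r : ℕ} (hF0 : F 0 = 0)
    (hF : ∀ᶠ t : ℝ in 𝓝 0, HasDerivAt F ((t : ℂ) ^ r * G t) t) (hG : ContinuousAt G 0) :
    Tendsto (fun t : ℝ => F t / (t : ℂ) ^ (r + 1)) (𝓝[≠] 0) (𝓝 (G 0 / (r + 1))) := by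
  obtain ⟨ε, hε, hFε⟩ := Metric.eventually_nhds_iff_ball.mp hF
  have hball : 𝓝[Metric.ball (0 : ℝ) ε] 0 = 𝓝 0 :=
    nhdsWithin_eq_nhds.mpr (Metric.ball_mem_nhds 0 hε)
  have hr : (r + 1 : ℂ) ≠ 0 := by exact_mod_cast r.succ_ne_zero
  set H : ℝ → ℂ := fun t => F t - G 0 * (t : ℂ) ^ (r + 1) / (r + 1)
  have hH : ∀ t ∈ Metric.ball (0 : ℝ) ε,
      HasDerivWithinAt H ((t : ℂ) ^ r * (G t - G 0)) (Metric.ball 0 ε) t := by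
    intro t ht
    have hpow := ((hasDerivAt_pow (r + 1) (t : ℂ)).comp_ofReal.const_mul (G 0)).div_const (r + 1)
    refine ((hFε t ht).sub hpow).hasDerivWithinAt.congr_deriv ?_
    push_cast
    field_simp
  have hH' : (fun t : ℝ => (t : ℂ) ^ r * (G t - G 0)) =o[𝓝[Metric.ball 0 ε] 0]
      fun t => (t - 0) ^ r := by
    rw [hball]
    have hpow : (fun t : ℝ => (t : ℂ) ^ r) =O[𝓝 0] fun t => (t - 0) ^ r :=
      isBigO_of_le _ fun t => by simp
    have hG' : (fun t => G t - G 0) =o[𝓝 0] fun _ => (1 : ℝ) :=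
      (isLittleO_one_iff ℝ).mpr (tendsto_sub_nhds_zero_iff.mpr hG)
    simpa using hpow.mul_isLittleO hG'
  have hHo : H =o[𝓝 0] fun t : ℝ => (t : ℂ) ^ (r + 1) := by
    have h := (convex_ball (0 : ℝ) ε).isLittleO_pow_succ_real (Metric.mem_ball_self hε) hH hH'
    rw [hball] at h
    exact (h.congr_left fun t => by simp [H, hF0]).trans_isBigO (isBigO_of_le _ fun t => by simp)
  have hlim := (hHo.tendsto_div_nhds_zero.mono_left (nhdsWithin_le_nhds (s := {0}ᶜ))).const_add
    (G 0 / (r + 1))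
  rw [add_zero] at hlim
  refine hlim.congr' (eventually_nhdsWithin_of_forall fun t ht => ?_)
  have ht' : (t : ℂ) ≠ 0 := by exact_mod_cast ht
  simp only [H]
  field_simp
  ring

theorem ContDiffOn.of_ofReal_pow_mul {f : ℝ → ℂ} {s : Set ℝ} {n : WithTop ℕ∞} {p : ℕ}
    (h : ContDiffOn ℝ n (fun t : ℝ => (t : ℂ) ^ p * f t) s) : ContDiffOn ℝ n f (s \ {0}) := by
  have hinv : ContDiffOn ℝ n (fun t : ℝ => ((t : ℂ) ^ p)⁻¹) (s \ {0}) :=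
    (Complex.ofRealCLM.contDiff.pow p).contDiffOn.inv fun t ht =>
      pow_ne_zero _ (Complex.ofReal_ne_zero.mpr ht.2)
  refine (hinv.mul (h.mono sdiff_subset)).congr fun t ht => ?_
  have : (t : ℂ) ≠ 0 := Complex.ofReal_ne_zero.mpr ht.2
  field_simp

theorem ContDiffOn.of_ofReal_mul {w : ℝ → ℂ} {s : Set ℝ} {k : ℕ} (hs : IsOpen s)
    (h0 : (0 : ℝ) ∈ s) (hu : ContDiffOn ℝ (k + 1) (fun x : ℝ => (x : ℂ) * w x) s)
    (hw : ContinuousOn w s) : ContDiffOn ℝ k w s := by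
  induction k with
  | zero => simpa using hw
  | succ k ih =>
    set u : ℝ → ℂ := fun x => (x : ℂ) * w x
    have hwk : ContDiffOn ℝ k w s := ih (hu.of_le (by norm_cast; omega))
    have hw' : ContDiffOn ℝ (k + 1) w (s \ {0}) :=
      ContDiffOn.of_ofReal_pow_mul (p := 1) (by simpa using hu.of_le (by norm_cast; omega))
    have hN := tendsto_div_pow_succ_of_hasDerivAt (F := quotientDerivNumerator u (k + 1))
      (quotientDerivNumerator_apply_zero (by simp [u]) _)
      (by filter_upwards [hs.mem_nhds h0] with t ht
          exact hasDerivAt_quotientDerivNumerator (hu.contDiffAt (hs.mem_nhds ht)))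
      ((hu.contDiffAt (hs.mem_nhds h0)).continuousAt_iteratedDeriv le_rfl)
    refine hwk.succ_of_tendsto_iteratedDeriv hs hw' ⟨_, hN.congr' ?_⟩
    filter_upwards [inter_mem_nhdsWithin {0}ᶜ (hs.mem_nhds h0)] with t ht
    exact (iteratedDeriv_eq_quotientDerivNumerator_div hs (hu.of_le (by norm_cast; omega))
      ⟨ht.2, ht.1⟩).symm

/-- Condition (iii) of the characterization, with `n = m - p` and `q = p`. -/
def HasWeightedDerivLimits (w : ℝ → ℂ) (n q : ℕ) : Prop :=
  ∀ k ≤ q, ∃ L : ℂ,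
    Tendsto (fun t : ℝ => (t : ℂ) ^ k * iteratedDeriv (n + k) w t) (𝓝[≠] 0) (𝓝 L)

theorem hasWeightedDerivLimits_iff_iteratedDerivWithin {w : ℝ → ℂ} {s : Set ℝ} {n q : ℕ}
    (hs : IsOpen s) (h0 : (0 : ℝ) ∈ s) :
    HasWeightedDerivLimits w n q ↔ ∀ k ≤ q, ∃ L : ℂ,
      Tendsto (fun t : ℝ => (t : ℂ) ^ k * iteratedDerivWithin (n + k) w (s \ {0}) t)
        (𝓝[s \ {0}] 0) (𝓝 L) := by
  have hnhds : 𝓝[s \ {0}] (0 : ℝ) = 𝓝[≠] 0 :=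
    nhdsWithin_inter_of_mem (mem_nhdsWithin_of_mem_nhds (hs.mem_nhds h0))
  refine forall₂_congr fun k _ => exists_congr fun L => ?_
  rw [hnhds]
  refine tendsto_congr' ?_
  filter_upwards [hnhds ▸ self_mem_nhdsWithin] with t ht
  rw [iteratedDerivWithin_of_isOpen (hs.sdiff isClosed_singleton) ht]

theorem ContDiffOn.hasWeightedDerivLimits_zero {w : ℝ → ℂ} {s : Set ℝ} {n : ℕ}
    (hs : IsOpen s) (h0 : (0 : ℝ) ∈ s) (hw : ContDiffOn ℝ n w s) :
    HasWeightedDerivLimits w n 0 := by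
  intro k hk
  obtain rfl : k = 0 := Nat.le_zero.mp hk
  have h := ((hw.contDiffAt (hs.mem_nhds h0)).continuousAt_iteratedDeriv le_rfl).tendsto
  exact ⟨_, by simpa using h.mono_left nhdsWithin_le_nhds⟩

theorem hasWeightedDerivLimits_ofReal_mul_iff {w : ℝ → ℂ} {n q : ℕ}
    (hw : ∀ᶠ t in 𝓝[≠] 0, ContDiffAt ℝ (n + q + 1 : ℕ) w t)
    (h0 : HasWeightedDerivLimits w n 0) :
    HasWeightedDerivLimits (fun x : ℝ => (x : ℂ) * w x) (n + 1) q ↔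
      HasWeightedDerivLimits w n (q + 1) := by
  have leibniz : ∀ k ≤ q,
      (fun t : ℝ => (t : ℂ) ^ (k + 1) * iteratedDeriv (n + (k + 1)) w t +
        (n + k + 1 : ℕ) * ((t : ℂ) ^ k * iteratedDeriv (n + k) w t)) =ᶠ[𝓝[≠] 0]
      fun t => (t : ℂ) ^ k * iteratedDeriv (n + 1 + k) (fun x : ℝ => (x : ℂ) * w x) t := by
    intro k hk
    filter_upwards [hw] with t ht
    rw [show n + 1 + k = n + k + 1 by omega, show n + (k + 1) = n + k + 1 by omega,
      iteratedDeriv_ofReal_mul (ht.of_le (by norm_cast; omega))]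
    push_cast
    ring
  constructor
  · intro h k hk
    induction k with
    | zero => exact h0 0 le_rfl
    | succ k ih =>
      obtain ⟨L, hL⟩ := h k (by omega)
      obtain ⟨L', hL'⟩ := ih (by omega)
      refine ⟨L - (n + k + 1 : ℕ) * L', (hL.sub (hL'.const_mul _)).congr' ?_⟩
      filter_upwards [leibniz k (by omega)] with t ht
      rw [← ht]
      ring
  · intro h k hk
    obtain ⟨L, hL⟩ := h (k + 1) (by omega)
    obtain ⟨L', hL'⟩ := h k (by omega)
    exact ⟨_, (hL.add (hL'.const_mul _)).congr' (leibniz k hk)⟩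

theorem contDiffOn_ofReal_mul_and_limits_iff {w : ℝ → ℂ} {s : Set ℝ} {n q : ℕ}
    (hs : IsOpen s) (h0 : (0 : ℝ) ∈ s) (hw : ContinuousOn w s)
    (hw' : ContDiffOn ℝ (n + q + 1 : ℕ) w (s \ {0})) :
    ContDiffOn ℝ (n + 1) (fun x : ℝ => (x : ℂ) * w x) s ∧
        HasWeightedDerivLimits (fun x : ℝ => (x : ℂ) * w x) (n + 1) q ↔
      ContDiffOn ℝ n w s ∧ HasWeightedDerivLimits w n (q + 1) := by
  have hw'' : ∀ᶠ t in 𝓝[≠] 0, ContDiffAt ℝ (n + q + 1 : ℕ) w t := by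
    filter_upwards [inter_mem_nhdsWithin {0}ᶜ (hs.mem_nhds h0)] with t ht
    exact hw'.contDiffAt ((hs.sdiff isClosed_singleton).mem_nhds ⟨ht.2, ht.1⟩)
  constructor
  · rintro ⟨hu, hlim⟩
    have hwn := hu.of_ofReal_mul hs h0 hw
    exact ⟨hwn, (hasWeightedDerivLimits_ofReal_mul_iff hw''
      (hwn.hasWeightedDerivLimits_zero hs h0)).mp hlim⟩
  · rintro ⟨hwn, hlim⟩
    have hlim' := (hasWeightedDerivLimits_ofReal_mul_iff hw''
      fun k hk => hlim k (by omega)).mpr hlim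
    refine ⟨ContDiffOn.succ_of_tendsto_iteratedDeriv (x := 0) hs ?_ ?_ ?_, hlim'⟩
    · exact (Complex.ofRealCLM.contDiff.contDiffOn).mul hwn
    · exact Complex.ofRealCLM.contDiff.contDiffOn.mul (hw'.of_le (by norm_cast; omega))
    · simpa using hlim' 0 (Nat.zero_le _)

theorem contDiffOn_pow_mul_and_limits_iff {w : ℝ → ℂ} {s : Set ℝ} {n q j : ℕ}
    (hs : IsOpen s) (h0 : (0 : ℝ) ∈ s) (hw : ContinuousOn w s)
    (hw' : ContDiffOn ℝ (n + q + j : ℕ) w (s \ {0})) :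
    ContDiffOn ℝ (n + j : ℕ) (fun x : ℝ => (x : ℂ) ^ j * w x) s ∧
        HasWeightedDerivLimits (fun x : ℝ => (x : ℂ) ^ j * w x) (n + j) q ↔
      ContDiffOn ℝ n w s ∧ HasWeightedDerivLimits w n (q + j) := by
  induction j generalizing n w with
  | zero => simp
  | succ j ih =>
    have hpow : (fun x : ℝ => (x : ℂ) ^ (j + 1) * w x) =
        fun x : ℝ => (x : ℂ) ^ j * ((x : ℂ) * w x) := by
      funext x; ring
    have hw1 : ContinuousOn (fun x : ℝ => (x : ℂ) * w x) s :=
      Complex.continuous_ofReal.continuousOn.mul hw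
    have hw1' :
        ContDiffOn ℝ (n + 1 + q + j : ℕ) (fun x : ℝ => (x : ℂ) * w x) (s \ {0}) := by
      rw [show n + 1 + q + j = n + q + (j + 1) by omega]
      exact Complex.ofRealCLM.contDiff.contDiffOn.mul hw'
    have hw2' : ContDiffOn ℝ (n + (q + j) + 1 : ℕ) w (s \ {0}) := by
      rwa [show n + (q + j) + 1 = n + q + (j + 1) by omega]
    rw [hpow, show n + (j + 1) = n + 1 + j by omega, ih hw1 hw1', Nat.cast_succ,
      contDiffOn_ofReal_mul_and_limits_iff hs h0 hw hw2', add_assoc]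

/-- Characterization of `ₚC^m`-functions: let `p ≤ m`, let `I = (a,b)` be an open interval
containing `0`, and let `f : I → ℂ` be continuous. Then `t ↦ t^p f t` is `C^m` on `I` if and
only if (i) `f` is `C^{m-p}` on `I`, (ii) `f` is `C^m` on `I ∖ {0}`, and (iii) for each
`0 ≤ k ≤ p` the limit of `t^k f^{(m-p+k)}(t)` as `t → 0` (within `I ∖ {0}`) exists finitely. -/
theorem stmt8 (p m : ℕ) (hpm : p ≤ m)
    (a b : ℝ) (ha : a < 0) (hb : 0 < b)
    (f : ℝ → ℂ) (hf : ContinuousOn f (Ioo a b)) :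
    ContDiffOn ℝ m (fun t : ℝ => (t : ℂ) ^ p * f t) (Ioo a b) ↔
      (ContDiffOn ℝ (m - p : ℕ) f (Ioo a b) ∧
       ContDiffOn ℝ m f (Ioo a b \ {0}) ∧
       ∀ k ≤ p, ∃ L : ℂ, Tendsto
         (fun t : ℝ => (t : ℂ) ^ k * iteratedDerivWithin (m - p + k) f (Ioo a b \ {0}) t)
         (nhdsWithin 0 (Ioo a b \ {0})) (nhds L)) := by
  obtain ⟨n, rfl⟩ := Nat.exists_eq_add_of_le' hpm
  have h0 : (0 : ℝ) ∈ Ioo a b := ⟨ha, hb⟩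
  have key := contDiffOn_pow_mul_and_limits_iff (n := n) (q := 0) (j := p) isOpen_Ioo h0 hf
  simp only [Nat.add_sub_cancel, add_zero, zero_add,
    ← hasWeightedDerivLimits_iff_iteratedDerivWithin isOpen_Ioo h0] at key ⊢
  constructor
  · intro hg
    have hf' : ContDiffOn ℝ (n + p : ℕ) f (Ioo a b \ {0}) := hg.of_ofReal_pow_mul
    obtain ⟨hfn, hlim⟩ := (key hf').mp ⟨hg, hg.hasWeightedDerivLimits_zero isOpen_Ioo h0⟩
    exact ⟨hfn, hf', hlim⟩
  · rintro ⟨h1, h2, h3⟩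
    exact ((key h2).mpr ⟨h1, h3⟩).1
end

section
/- Let G be a compact Lie group (with a fixed bi-invariant Riemannian structure), let K ⋐ J ⋐ I be nested open intervals with K relatively compact in J and J relatively compact in I, and let s : J → G be of class C¹. Then there exists s̃ : I → G of class C¹ such that: (i) s̃ = s on K; (ii) sup_{t ∈ I} ‖s̃'(t)‖ = sup_{t ∈ K} ‖s'(t)‖; (iii) s̃ is constant on each connected component of I ∖ J. -/
/-!
Let `M = sup_K ‖s'‖`. The extension is a reparametrization `s̃ = s ∘ Φ`, which keeps values in
`s(J) ⊆ H`, so no exponential map is needed. Here `Φ : ℝ → J` is `C¹`, the identity on `K`,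
constant near both ends, and satisfies `‖s'(Φ t)‖ Φ'(t) ≤ M`. Take `Φ = ψ ∘ θ`, where `θ` is a
primitive of a bump function equal to `1` on `K` (so `0 ≤ θ' ≤ 1` and `θ` is constant off a
neighbourhood of `K`), and `ψ` is the inverse of `u = ∫ max(‖s'‖, M) / M`. Then
`ψ' = M / max(‖s' ∘ ψ‖, M)`, which caps the speed at `M` and equals `1` on `K`. If `M = 0`, then `s`
is constant on `K` and a constant extension works.
-/

open Set Filter intervalIntegral

lemma surjective_of_hasDerivAt_one_le {u w : ℝ → ℝ} (hu : ∀ x, HasDerivAt u (w x) x)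
    (hw : ∀ x, 1 ≤ w x) : Function.Surjective u := by
  have hu_sub : Monotone fun x => u x - x :=
    monotone_of_hasDerivAt_nonneg (fun x => (hu x).sub (hasDerivAt_id x))
      (fun x => sub_nonneg.2 (hw x))
  refine Continuous.surjective (continuous_iff_continuousAt.2 fun x => (hu x).continuousAt) ?_ ?_
  · refine tendsto_atTop_mono' _ ?_ (tendsto_atTop_add_const_right _ (u 0) tendsto_id)
    filter_upwards [eventually_ge_atTop 0] with x hx
    have h := hu_sub hx
    simp only [id, sub_zero] at h ⊢
    linarith
  · refine tendsto_atBot_mono' _ ?_ (tendsto_atBot_add_const_right _ (u 0) tendsto_id)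
    filter_upwards [eventually_le_atBot 0] with x hx
    have h := hu_sub hx
    simp only [id, sub_zero] at h ⊢
    linarith

lemma exists_contDiff_speed_limiter {g : ℝ → ℝ} (hg : Continuous g) {M : ℝ} (hM : 0 < M)
    {c d : ℝ} (hgM : ∀ x ∈ Icc c d, g x ≤ M) :
    ∃ ψ : ℝ → ℝ, ContDiff ℝ 1 ψ ∧ EqOn ψ id (Icc c d) ∧ (∀ y, deriv ψ y ∈ Icc 0 1) ∧
      ∀ y, g (ψ y) * deriv ψ y ≤ M := by
  set w : ℝ → ℝ := fun x => max (g x) M / M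
  have hw : Continuous w := by fun_prop
  have hw_one_le : ∀ x, 1 ≤ w x := fun x => (one_le_div hM).2 (le_max_right _ _)
  have hw_pos : ∀ x, 0 < w x := fun x => one_pos.trans_le (hw_one_le x)
  set u : ℝ → ℝ := fun x => c + ∫ y in c..x, w y
  have hu : ∀ x, HasDerivAt u (w x) x := fun x =>
    ((hw.integral_hasStrictDerivAt c x).hasDerivAt).const_add c
  have hu_id : EqOn u id (Icc c d) := fun x hx => by
    have hw_one : EqOn w 1 (uIcc c x) := fun y hy => by
      rw [uIcc_of_le hx.1] at hy
      simp [w, max_eq_right (hgM y ⟨hy.1, hy.2.trans hx.2⟩), hM.ne']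
    simp [u, integral_congr hw_one]
  set e := StrictMono.orderIsoOfSurjective u (strictMono_of_hasDerivAt_pos hu hw_pos)
    (surjective_of_hasDerivAt_one_le hu hw_one_le)
  set ψ : ℝ → ℝ := ⇑e.symm
  have hψ_cont : Continuous ψ := e.symm.continuous
  have huψ : ∀ y, u (ψ y) = y := e.apply_symm_apply
  have hψu : ∀ x, ψ (u x) = x := e.symm_apply_apply
  have hψ : ∀ y, HasDerivAt ψ (w (ψ y))⁻¹ y := fun y =>
    (hu (ψ y)).of_local_left_inverse hψ_cont.continuousAt (hw_pos _).ne'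
      (Eventually.of_forall huψ)
  have hψ' : deriv ψ = fun y => (w (ψ y))⁻¹ := funext fun y => (hψ y).deriv
  refine ⟨ψ, contDiff_one_iff_deriv.2 ⟨fun y => (hψ y).differentiableAt, ?_⟩, fun y hy => ?_,
    fun y => ?_, fun y => ?_⟩
  · rw [hψ']
    exact (hw.comp hψ_cont).inv₀ fun y => (hw_pos _).ne'
  · have := hψu y
    rwa [hu_id hy] at this
  · rw [hψ']
    exact ⟨inv_nonneg.2 (hw_pos _).le, inv_le_one_of_one_le₀ (hw_one_le _)⟩
  · rw [hψ']
    simp only [w, inv_div]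
    rw [← mul_div_assoc, div_le_iff₀ (hM.trans_le (le_max_right _ _))]
    exact mul_le_mul_of_nonneg_right (le_max_left _ _) hM.le |>.trans_eq (mul_comm _ _)

lemma exists_contDiff_cutoff {c d δ : ℝ} (hcd : c ≤ d) (hδ : 0 < δ) :
    ∃ θ : ℝ → ℝ, ContDiff ℝ 1 θ ∧ EqOn θ id (Icc c d) ∧ (∀ t, deriv θ t ∈ Icc 0 1) ∧
      EqOn θ (fun _ => θ (c - δ)) (Iic (c - δ)) ∧ EqOn θ (fun _ => θ (d + δ)) (Ici (d + δ)) := by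
  let φ : ContDiffBump ((c + d) / 2) :=
    ⟨(d - c) / 2 + δ / 2, (d - c) / 2 + δ, by linarith, by linarith⟩
  have hφ_one : EqOn φ 1 (Icc c d) := fun x hx => φ.one_of_mem_closedBall <| by
    rw [Metric.mem_closedBall, Real.dist_eq, abs_le]
    constructor <;> simp only [φ] <;> linarith [hx.1, hx.2]
  have hφ_zero : EqOn φ 0 (Iic (c - δ) ∪ Ici (d + δ)) := fun x hx => φ.zero_of_le_dist <| by
    rw [Real.dist_eq]
    rcases hx with hx | hx
    · simp only [φ]; rw [abs_of_nonpos] <;> linarith [mem_Iic.1 hx]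
    · simp only [φ]; rw [abs_of_nonneg] <;> linarith [mem_Ici.1 hx]
  set θ : ℝ → ℝ := fun t => c + ∫ x in c..t, φ x
  have hθ : ∀ t, HasDerivAt θ (φ t) t := fun t =>
    ((φ.continuous.integral_hasStrictDerivAt c t).hasDerivAt).const_add c
  have hθ_sub : ∀ t₁ t₂, θ t₂ - θ t₁ = ∫ x in t₁..t₂, φ x := fun t₁ t₂ => by
    simp only [θ, add_sub_add_left_eq_sub]
    exact integral_interval_sub_left (φ.continuous.intervalIntegrable _ _)
      (φ.continuous.intervalIntegrable _ _)
  have hθ_const : ∀ t₁ t₂, EqOn φ 0 (uIcc t₁ t₂) → θ t₂ = θ t₁ := fun t₁ t₂ h => by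
    have := hθ_sub t₁ t₂
    rw [integral_congr h] at this
    simpa [sub_eq_zero] using this
  refine ⟨θ, contDiff_one_iff_deriv.2 ⟨fun t => (hθ t).differentiableAt, ?_⟩, fun t ht => ?_,
    fun t => ?_, fun t ht => ?_, fun t ht => ?_⟩
  · rw [show deriv θ = φ from funext fun t => (hθ t).deriv]
    exact φ.continuous
  · have := hθ_sub c t
    rw [integral_congr (hφ_one.mono ?_)] at this
    · have hθc : θ c = c := by simp [θ]
      simp only [Pi.one_apply, integral_const, smul_eq_mul, mul_one] at this
      simp only [id]; linarith
    · rw [uIcc_of_le ht.1]; exact Icc_subset_Icc_right ht.2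
  · rw [(hθ t).deriv]; exact ⟨φ.nonneg, φ.le_one⟩
  · refine hθ_const _ _ (hφ_zero.mono fun x hx => Or.inl ?_)
    rw [uIcc_of_ge ht] at hx; exact hx.2
  · refine hθ_const _ _ (hφ_zero.mono fun x hx => Or.inr ?_)
    rw [uIcc_of_le ht] at hx; exact hx.1

lemma apply_mem_Icc_of_deriv_mem_Icc {Φ : ℝ → ℝ} {c d δ : ℝ} (hcd : c ≤ d) (hδ : 0 ≤ δ)
    (hΦ : Differentiable ℝ Φ) (hΦ' : ∀ t, deriv Φ t ∈ Icc 0 1) (hc : Φ c = c) (hd : Φ d = d)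
    (hleft : EqOn Φ (fun _ => Φ (c - δ)) (Iic (c - δ)))
    (hright : EqOn Φ (fun _ => Φ (d + δ)) (Ici (d + δ))) (t : ℝ) :
    Φ t ∈ Icc (c - δ) (d + δ) := by
  have hΦ_mono : Monotone Φ := monotone_of_deriv_nonneg hΦ fun t => (hΦ' t).1
  have hΦ_sub : Antitone fun t => Φ t - t :=
    antitone_of_hasDerivAt_nonpos (fun t => (hΦ t).hasDerivAt.sub (hasDerivAt_id t))
      fun t => sub_nonpos.2 (hΦ' t).2
  have hlow : c - δ ≤ Φ (c - δ) := by linarith [hΦ_sub (show c - δ ≤ c by linarith)]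
  have hup : Φ (d + δ) ≤ d + δ := by linarith [hΦ_sub (show d ≤ d + δ by linarith)]
  have hcδ : c - δ ≤ d + δ := by linarith
  rcases le_total t (c - δ) with ht | ht
  · rw [hleft ht]; exact ⟨hlow, (hΦ_mono hcδ).trans hup⟩
  rcases le_total t (d + δ) with ht' | ht'
  · exact ⟨hlow.trans (hΦ_mono ht), (hΦ_mono ht').trans hup⟩
  · rw [hright ht']; exact ⟨hlow.trans (hΦ_mono hcδ), hup⟩

lemma exists_contDiff_reparam {g : ℝ → ℝ} {M c d δ : ℝ} (hM : 0 < M) (hcd : c ≤ d) (hδ : 0 < δ)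
    (hg : ContinuousOn g (Icc (c - δ) (d + δ))) (hgM : ∀ x ∈ Icc c d, g x ≤ M) :
    ∃ Φ : ℝ → ℝ, ContDiff ℝ 1 Φ ∧ EqOn Φ id (Icc c d) ∧ (∀ t, Φ t ∈ Icc (c - δ) (d + δ)) ∧
      (∀ t, 0 ≤ deriv Φ t) ∧ (∀ t, g (Φ t) * deriv Φ t ≤ M) ∧
      EqOn Φ (fun _ => Φ (c - δ)) (Iic (c - δ)) ∧ EqOn Φ (fun _ => Φ (d + δ)) (Ici (d + δ)) := by
  have hcδ : c - δ ≤ d + δ := by linarith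
  set ĝ : ℝ → ℝ := fun x => g (projIcc _ _ hcδ x)
  have hĝ : Continuous ĝ := hg.comp_continuous (continuous_subtype_val.comp continuous_projIcc)
    fun x => (projIcc _ _ hcδ x).2
  have hĝg : EqOn ĝ g (Icc (c - δ) (d + δ)) := fun x hx => by simp [ĝ, projIcc_of_mem _ hx]
  have hKδ : Icc c d ⊆ Icc (c - δ) (d + δ) := Icc_subset_Icc (by linarith) (by linarith)
  obtain ⟨ψ, hψ, hψ_id, hψ'_mem, hψ_bound⟩ := exists_contDiff_speed_limiter hĝ hM
    fun x hx => (hĝg (hKδ hx)).trans_le (hgM x hx)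
  obtain ⟨θ, hθ, hθ_id, hθ'_mem, hθ_left, hθ_right⟩ := exists_contDiff_cutoff hcd hδ
  have hΦ' : ∀ t, deriv (ψ ∘ θ) t = deriv ψ (θ t) * deriv θ t := fun t =>
    deriv_comp t (hψ.differentiable one_ne_zero _) (hθ.differentiable one_ne_zero _)
  have hΦ'_mem : ∀ t, deriv (ψ ∘ θ) t ∈ Icc 0 1 := fun t => by
    rw [hΦ']
    obtain ⟨h₀, h₁⟩ := hψ'_mem (θ t)
    obtain ⟨h₀', h₁'⟩ := hθ'_mem t
    exact ⟨mul_nonneg h₀ h₀', mul_le_one₀ h₁ h₀' h₁'⟩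
  have hΦ_diff : Differentiable ℝ (ψ ∘ θ) := (hψ.comp hθ).differentiable one_ne_zero
  have hΦ_eq_id : EqOn (ψ ∘ θ) id (Icc c d) := fun t ht => by
    simp [hθ_id ht, hψ_id ht]
  have hΦ_left : EqOn (ψ ∘ θ) (fun _ => (ψ ∘ θ) (c - δ)) (Iic (c - δ)) := fun t ht => by
    simp [hθ_left ht]
  have hΦ_right : EqOn (ψ ∘ θ) (fun _ => (ψ ∘ θ) (d + δ)) (Ici (d + δ)) := fun t ht => by
    simp [hθ_right ht]
  have hΦ_mem : ∀ t, (ψ ∘ θ) t ∈ Icc (c - δ) (d + δ) :=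
    apply_mem_Icc_of_deriv_mem_Icc hcd hδ.le hΦ_diff hΦ'_mem (hΦ_eq_id ⟨le_rfl, hcd⟩)
      (hΦ_eq_id ⟨hcd, le_rfl⟩) hΦ_left hΦ_right
  refine ⟨ψ ∘ θ, hψ.comp hθ, hΦ_eq_id, hΦ_mem, fun t => (hΦ'_mem t).1, fun t => ?_,
    hΦ_left, hΦ_right⟩
  rw [← hĝg (hΦ_mem t), hΦ', ← mul_assoc, Function.comp_apply]
  obtain ⟨h₀, h₁⟩ := hθ'_mem t
  have := hψ_bound (θ t)
  nlinarith [mul_nonneg (sub_nonneg.2 this) h₀, mul_nonneg hM.le (sub_nonneg.2 h₁)]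

section RealSupremum

variable {ι : Type*} {S T : Set ι} {F G : ι → ℝ}

lemma Real.biSup_le {a : ℝ} (hF : ∀ t ∈ S, F t ≤ a) (ha : 0 ≤ a) : ⨆ t ∈ S, F t ≤ a :=
  Real.iSup_le (fun t => Real.iSup_le (hF t) ha) ha

lemma Real.le_biSup {C : ℝ} (hF : ∀ t ∈ S, F t ≤ C) {t : ι} (ht : t ∈ S) :
    F t ≤ ⨆ t ∈ S, F t :=
  le_ciSup₂ (f := fun t (_ : t ∈ S) => F t)
    ⟨C, by rintro _ ⟨_, ⟨u, rfl⟩, ⟨hu, rfl⟩⟩; exact hF u hu⟩ t ht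

lemma Real.biSup_eq_of_eqOn_of_le (hF : ∀ t ∈ T, 0 ≤ F t) (hST : S ⊆ T) (hFG : EqOn F G S)
    (hle : ∀ t ∈ T, F t ≤ ⨆ t ∈ S, G t) : ⨆ t ∈ T, F t = ⨆ t ∈ S, G t := by
  have hG : 0 ≤ ⨆ t ∈ S, G t :=
    Real.iSup_nonneg fun t => Real.iSup_nonneg fun ht => hFG ht ▸ hF t (hST ht)
  refine le_antisymm (Real.biSup_le hle hG) (Real.biSup_le (fun t ht => ?_) ?_)
  · rw [← hFG ht]; exact Real.le_biSup hle (hST ht)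
  · exact Real.iSup_nonneg fun t => Real.iSup_nonneg (hF t)

end RealSupremum

section Curve

variable {E : Type*} [NormedAddCommGroup E] [NormedSpace ℝ E] {s : ℝ → E} {a aJ aK bK bJ b : ℝ}

lemma norm_deriv_le_biSup (hs : ContDiffOn ℝ 1 s (Ioo aJ bJ)) (h₂ : aJ < aK) (h₃ : aK < bK)
    (h₄ : bK < bJ) {x : ℝ} (hx : x ∈ Icc aK bK) :
    ‖deriv s x‖ ≤ ⨆ t ∈ Ioo aK bK, ‖derivWithin s (Ioo aJ bJ) t‖ := by
  have hKJ : Icc aK bK ⊆ Ioo aJ bJ := Icc_subset_Ioo h₂ h₄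
  have hs' : ContinuousOn (fun t => ‖deriv s t‖) (Icc aK bK) :=
    (hs.continuousOn_deriv_of_isOpen isOpen_Ioo le_rfl).norm.mono hKJ
  have hderiv : EqOn (derivWithin s (Ioo aJ bJ)) (deriv s) (Ioo aK bK) := fun t ht =>
    derivWithin_of_isOpen isOpen_Ioo (hKJ (Ioo_subset_Icc_self ht))
  obtain ⟨C, hC⟩ := isCompact_Icc.exists_bound_of_continuousOn hs'
  rw [← closure_Ioo h₃.ne] at hs' hx
  refine le_on_closure (f := fun t => ‖deriv s t‖) (fun t ht => ?_) hs' continuousOn_const hx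
  rw [← hderiv ht]
  refine Real.le_biSup (F := fun t => ‖derivWithin s (Ioo aJ bJ) t‖) (C := C) (fun u hu => ?_) ht
  rw [hderiv hu]
  simpa using hC u (Ioo_subset_Icc_self hu)

lemma exists_reparam_of_contDiffOn (hs : ContDiffOn ℝ 1 s (Ioo aJ bJ)) (h₂ : aJ < aK)
    (h₃ : aK < bK) (h₄ : bK < bJ) :
    ∃ Φ : ℝ → ℝ, ContDiff ℝ 1 Φ ∧ (∀ t, Φ t ∈ Ioo aJ bJ) ∧ EqOn (s ∘ Φ) s (Ioo aK bK) ∧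
      (∀ t, ‖deriv Φ t‖ * ‖deriv s (Φ t)‖ ≤ ⨆ t ∈ Ioo aK bK, ‖derivWithin s (Ioo aJ bJ) t‖) ∧
      EqOn Φ (fun _ => Φ aJ) (Iic aJ) ∧ EqOn Φ (fun _ => Φ bJ) (Ici bJ) := by
  set M := ⨆ t ∈ Ioo aK bK, ‖derivWithin s (Ioo aJ bJ) t‖
  have hKJ : Ioo aK bK ⊆ Ioo aJ bJ := Ioo_subset_Ioo h₂.le h₄.le
  have hM₀ : 0 ≤ M := Real.iSup_nonneg fun t => Real.iSup_nonneg fun _ => norm_nonneg _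
  rcases hM₀.eq_or_lt with hM | hM
  · set m := (aK + bK) / 2
    have hm : m ∈ Ioo aK bK := ⟨by simp only [m]; linarith, by simp only [m]; linarith⟩
    have hs_const : ∀ t ∈ Ioo aK bK, s m = s t := fun t ht =>
      isOpen_Ioo.is_const_of_deriv_eq_zero isPreconnected_Ioo
        ((hs.differentiableOn one_ne_zero).mono hKJ)
        (fun x hx => norm_le_zero_iff.1
          (hM ▸ norm_deriv_le_biSup hs h₂ h₃ h₄ (Ioo_subset_Icc_self hx))) hm ht
    exact ⟨fun _ => m, contDiff_const, fun _ => hKJ hm, hs_const, fun t => by simpa using hM₀,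
      fun _ _ => rfl, fun _ _ => rfl⟩
  · set δ := min (aK - aJ) (bJ - bK) / 2
    have hδ : 0 < δ := half_pos (lt_min (by linarith) (by linarith))
    have haJ : aJ < aK - δ := by
      have := min_le_left (aK - aJ) (bJ - bK); simp only [δ]; linarith
    have hbJ : bK + δ < bJ := by
      have := min_le_right (aK - aJ) (bJ - bK); simp only [δ]; linarith
    obtain ⟨Φ, hΦ, hΦ_id, hΦ_mem, hΦ'_nonneg, hΦ_bound, hΦ_left, hΦ_right⟩ :=
      exists_contDiff_reparam (g := fun x => ‖deriv s x‖) hM h₃.le hδ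
        ((hs.continuousOn_deriv_of_isOpen isOpen_Ioo le_rfl).norm.mono (Icc_subset_Ioo haJ hbJ))
        fun x hx => norm_deriv_le_biSup hs h₂ h₃ h₄ hx
    refine ⟨Φ, hΦ, fun t => Icc_subset_Ioo haJ hbJ (hΦ_mem t),
      fun t ht => by simp [hΦ_id (Ioo_subset_Icc_self ht)], fun t => ?_, fun t ht => ?_,
      fun t ht => ?_⟩
    · rw [Real.norm_of_nonneg (hΦ'_nonneg t), mul_comm]
      exact hΦ_bound t
    · rw [hΦ_left (mem_Iic.2 (le_trans ht haJ.le)), hΦ_left (mem_Iic.2 haJ.le)]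
    · rw [hΦ_right (mem_Ici.2 (le_trans hbJ.le ht)), hΦ_right (mem_Ici.2 hbJ.le)]

lemma exists_extension_of_contDiffOn (hs : ContDiffOn ℝ 1 s (Ioo aJ bJ)) (h₁ : a < aJ)
    (h₂ : aJ < aK) (h₃ : aK < bK) (h₄ : bK < bJ) (h₅ : bJ < b) :
    ∃ σ : ℝ → E, ContDiff ℝ 1 σ ∧ (∀ t, σ t ∈ s '' Ioo aJ bJ) ∧
      EqOn σ s (Ioo aK bK) ∧
      (⨆ t ∈ Ioo a b, ‖derivWithin σ (Ioo a b) t‖) =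
        (⨆ t ∈ Ioo aK bK, ‖derivWithin s (Ioo aJ bJ) t‖) ∧
      EqOn σ (fun _ => σ aJ) (Iic aJ) ∧ EqOn σ (fun _ => σ bJ) (Ici bJ) := by
  obtain ⟨Φ, hΦ, hΦJ, hΦK, hΦ_bound, hΦ_left, hΦ_right⟩ :=
    exists_reparam_of_contDiffOn hs h₂ h₃ h₄
  have hderiv : ∀ t, HasDerivAt (s ∘ Φ) (deriv Φ t • deriv s (Φ t)) t := fun t =>
    ((hs.differentiableOn one_ne_zero).differentiableAt
      (isOpen_Ioo.mem_nhds (hΦJ t))).hasDerivAt.scomp t (hΦ.differentiable one_ne_zero t).hasDerivAt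
  refine ⟨s ∘ Φ, hs.comp_contDiff hΦ hΦJ, fun t => ⟨Φ t, hΦJ t, rfl⟩, hΦK, ?_,
    fun t ht => congrArg s (hΦ_left ht), fun t ht => congrArg s (hΦ_right ht)⟩
  refine Real.biSup_eq_of_eqOn_of_le (fun _ _ => norm_nonneg _)
    (Ioo_subset_Ioo (h₁.trans h₂).le (h₄.trans h₅).le) (fun t ht => ?_) (fun t ht => ?_)
  · have hKI : t ∈ Ioo a b := ⟨by linarith [ht.1], by linarith [ht.2]⟩
    have hKJ : t ∈ Ioo aJ bJ := ⟨by linarith [ht.1], by linarith [ht.2]⟩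
    simp only [derivWithin_of_isOpen isOpen_Ioo hKI, derivWithin_of_isOpen isOpen_Ioo hKJ,
      (hΦK.eventuallyEq_of_mem (isOpen_Ioo.mem_nhds ht)).deriv_eq]
  · rw [derivWithin_of_isOpen isOpen_Ioo ht, (hderiv t).deriv, norm_smul]
    exact hΦ_bound t

end Curve

theorem stmt9_general {V : Type*} [NormedAddCommGroup V] [InnerProductSpace ℝ V]
    (H : Subgroup (V ≃ₗᵢ[ℝ] V))
    (a aJ aK bK bJ b : ℝ)
    (h1 : a < aJ) (h2 : aJ < aK) (h3 : aK < bK) (h4 : bK < bJ) (h5 : bJ < b)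
    (s : ℝ → (V →L[ℝ] V))
    (hs : ContDiffOn ℝ 1 s (Ioo aJ bJ))
    (hmem : ∀ t ∈ Ioo aJ bJ, ∃ g ∈ H, s t = g.toLinearIsometry.toContinuousLinearMap) :
    ∃ stil : ℝ → (V →L[ℝ] V),
      ContDiffOn ℝ 1 stil (Ioo a b) ∧
      (∀ t ∈ Ioo a b, ∃ g ∈ H, stil t = g.toLinearIsometry.toContinuousLinearMap) ∧
      (∀ t ∈ Ioo aK bK, stil t = s t) ∧
      (⨆ t ∈ Ioo a b, ‖derivWithin stil (Ioo a b) t‖) =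
        (⨆ t ∈ Ioo aK bK, ‖derivWithin s (Ioo aJ bJ) t‖) ∧
      (∀ t ∈ Ioc a aJ, stil t = stil aJ) ∧
      (∀ t ∈ Ico bJ b, stil t = stil bJ) := by
  obtain ⟨stil, hstil, hrange, hK, hsup, hleft, hright⟩ :=
    exists_extension_of_contDiffOn hs h1 h2 h3 h4 h5
  refine ⟨stil, hstil.contDiffOn, fun t _ => ?_, hK, hsup, fun t ht => hleft ht.2,
    fun t ht => hright ht.1⟩
  obtain ⟨x, hx, hsx⟩ := hrange t
  exact hsx ▸ hmem x hx

/-- Extension of a `C¹` curve in a compact Lie group (realized as a closed subgroup `H` of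
the group of linear isometries of a finite-dimensional real inner product space `V`, with
the bi-invariant operator-norm metric): given nested open intervals `K = (aK,bK) ⋐
J = (aJ,bJ) ⋐ I = (a,b)` and a `C¹` map `s : J → H`, there is a `C¹` map `s̃ : I → H` with
(i) `s̃ = s` on `K`, (ii) `sup_I ‖s̃'‖ = sup_K ‖s'‖`, and (iii) `s̃` constant on each
connected component of `I ∖ J`. -/
theorem stmt9 {V : Type*} [NormedAddCommGroup V] [InnerProductSpace ℝ V]
    [FiniteDimensional ℝ V]
    (H : Subgroup (V ≃ₗᵢ[ℝ] V))
    (hHclosed : IsClosed ((fun g : V ≃ₗᵢ[ℝ] V =>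
      g.toLinearIsometry.toContinuousLinearMap) '' (H : Set (V ≃ₗᵢ[ℝ] V))))
    (a aJ aK bK bJ b : ℝ)
    (h1 : a < aJ) (h2 : aJ < aK) (h3 : aK < bK) (h4 : bK < bJ) (h5 : bJ < b)
    (s : ℝ → (V →L[ℝ] V))
    (hs : ContDiffOn ℝ 1 s (Ioo aJ bJ))
    (hmem : ∀ t ∈ Ioo aJ bJ, ∃ g ∈ H, s t = g.toLinearIsometry.toContinuousLinearMap) :
    ∃ stil : ℝ → (V →L[ℝ] V),
      ContDiffOn ℝ 1 stil (Ioo a b) ∧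
      (∀ t ∈ Ioo a b, ∃ g ∈ H, stil t = g.toLinearIsometry.toContinuousLinearMap) ∧
      (∀ t ∈ Ioo aK bK, stil t = s t) ∧
      (⨆ t ∈ Ioo a b, ‖derivWithin stil (Ioo a b) t‖) =
        (⨆ t ∈ Ioo aK bK, ‖derivWithin s (Ioo aJ bJ) t‖) ∧
      (∀ t ∈ Ioc a aJ, stil t = stil aJ) ∧
      (∀ t ∈ Ico bJ b, stil t = stil bJ) :=
  stmt9_general H a aJ aK bK bJ b h1 h2 h3 h4 h5 s hs hmem
end

section
/- Let σ₁ be a homogeneous polynomial of degree d₁ and suppose I ⊆ ℝ is an open interval, c₁ : I → ℝ is C^{1,1} with c₁ ≥ 0, and A₁ := max{ δ⁻¹ ‖c₁‖_{L^∞(I₁)}^{1/2}, Lip_{I₁}(c₁')^{1/2} }, where I₀ ⋐ I₁ ⋐ I and δ is the distance between the endpoints of I₀ and those of I₁. Then for every t₀ ∈ I₀ with c₁(t₀) ≠ 0 and every t with |t - t₀| < (6A₁)⁻¹ c₁(t₀)^{1/2}: (a) t ∈ I₁, and (b) 1/2 ≤ c₁(t)/c₁(t₀) ≤ 2. -/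
open Set

lemma taylorAux (a₁ b₁ K : ℝ) (c₁ c₁' : ℝ → ℝ)
    (hderiv : ∀ t ∈ Ioo a₁ b₁, HasDerivAt c₁ (c₁' t) t)
    (hK : 0 ≤ K)
    (hlip : LipschitzOnWith (Real.toNNReal K) c₁' (Ioo a₁ b₁))
    (t₀ : ℝ) (ht₀ : t₀ ∈ Ioo a₁ b₁) (t : ℝ) (ht : t ∈ Ioo a₁ b₁) :
    |c₁ t - c₁ t₀ - c₁' t₀ * (t - t₀)| ≤ K * (t - t₀)^2 := by
  have hsub : uIcc t₀ t ⊆ Ioo a₁ b₁ := Set.ordConnected_Ioo.uIcc_subset ht₀ ht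
  set g : ℝ → ℝ := fun x => c₁ x - c₁' t₀ * x with hg
  have hgd : ∀ x ∈ uIcc t₀ t, HasDerivWithinAt g (c₁' x - c₁' t₀) (uIcc t₀ t) x := by
    intro x hx
    have h1 : HasDerivAt g (c₁' x - c₁' t₀ * 1) x :=
      (hderiv x (hsub hx)).sub ((hasDerivAt_id x).const_mul (c₁' t₀))
    simpa using h1.hasDerivWithinAt
  have hbound : ∀ x ∈ uIcc t₀ t, ‖c₁' x - c₁' t₀‖ ≤ K * |t - t₀| := by
    intro x hx
    have h1 : dist (c₁' x) (c₁' t₀) ≤ K * dist x t₀ := by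
      have := hlip.dist_le_mul x (hsub hx) t₀ ht₀
      simpa [Real.coe_toNNReal K hK] using this
    have h2 : |x - t₀| ≤ |t - t₀| := by
      rcases mem_uIcc.1 hx with ⟨h3, h4⟩ | ⟨h3, h4⟩ <;>
        rw [abs_sub_le_iff] <;> constructor <;>
        nlinarith [le_abs_self (t - t₀), neg_abs_le (t - t₀)]
    rw [Real.dist_eq, Real.dist_eq] at h1
    calc ‖c₁' x - c₁' t₀‖ = |c₁' x - c₁' t₀| := rfl
      _ ≤ K * |x - t₀| := h1
      _ ≤ K * |t - t₀| := by nlinarith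
  have key := (convex_uIcc t₀ t).norm_image_sub_le_of_norm_hasDerivWithin_le
    hgd hbound left_mem_uIcc (right_mem_uIcc (a := t₀) (b := t))
  have : ‖g t - g t₀‖ = |c₁ t - c₁ t₀ - c₁' t₀ * (t - t₀)| := by
    simp [hg, Real.norm_eq_abs]; ring_nf
  rw [this] at key
  calc |c₁ t - c₁ t₀ - c₁' t₀ * (t - t₀)| ≤ K * |t - t₀| * ‖t - t₀‖ := key
    _ = K * (t - t₀)^2 := by rw [Real.norm_eq_abs]; rw [mul_assoc, ← abs_mul, ← sq]; rw [abs_of_nonneg (sq_nonneg _)]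

set_option maxHeartbeats 800000 in
/-- Conditions (A.1)–(A.2): let `c₁` be a nonnegative function, differentiable with
derivative `c₁'` Lipschitz with constant `K` on `I₁ = (a₁,b₁)`, let `I₀ = (a₀,b₀) ⋐ I₁`,
let `δ` be the distance between the endpoints of `I₀` and `I₁`, let `S` bound `‖c₁‖_{L^∞(I₁)}`,
and set `A₁ = max (δ⁻¹ S^{1/2}) (K^{1/2})`. Then for each `t₀ ∈ I₀` with `c₁ t₀ ≠ 0` and
each `t` with `|t - t₀| < (6 A₁)⁻¹ (c₁ t₀)^{1/2}`: (a) `t ∈ I₁`, and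
(b) `1/2 ≤ c₁ t / c₁ t₀ ≤ 2`. -/

theorem stmt13 (a₀ b₀ a₁ b₁ : ℝ)
    (ha : a₁ < a₀) (hab : a₀ < b₀) (hb : b₀ < b₁)
    (c₁ c₁' : ℝ → ℝ)
    (hderiv : ∀ t ∈ Ioo a₁ b₁, HasDerivAt c₁ (c₁' t) t)
    (hnonneg : ∀ t ∈ Ioo a₁ b₁, 0 ≤ c₁ t)
    (K : ℝ) (hK : 0 ≤ K)
    (hlip : LipschitzOnWith (Real.toNNReal K) c₁' (Ioo a₁ b₁))
    (S : ℝ) (hS : ∀ t ∈ Ioo a₁ b₁, |c₁ t| ≤ S)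
    (δ A₁ : ℝ)
    (hδ : δ = min (a₀ - a₁) (b₁ - b₀))
    (hA₁ : A₁ = max (δ⁻¹ * Real.sqrt S) (Real.sqrt K)) :
    ∀ t₀ ∈ Ioo a₀ b₀, c₁ t₀ ≠ 0 →
      ∀ t : ℝ, |t - t₀| < (6 * A₁)⁻¹ * Real.sqrt (c₁ t₀) →
        t ∈ Ioo a₁ b₁ ∧ 1 / 2 ≤ c₁ t / c₁ t₀ ∧ c₁ t / c₁ t₀ ≤ 2 := by
  intro t₀ ht₀ hc₀ t ht
  have ht₀1 : a₀ < t₀ := ht₀.1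
  have ht₀2 : t₀ < b₀ := ht₀.2
  have hδa : δ ≤ a₀ - a₁ := hδ ▸ min_le_left _ _
  have hδb : δ ≤ b₁ - b₀ := hδ ▸ min_le_right _ _
  have hδ0 : 0 < δ := by rw [hδ]; exact lt_min (by linarith) (by linarith)
  have ht₀I : t₀ ∈ Ioo a₁ b₁ := ⟨by linarith, by linarith⟩
  have hc₀pos : 0 < c₁ t₀ := lt_of_le_of_ne (hnonneg t₀ ht₀I) (Ne.symm hc₀)
  set c₀ := c₁ t₀ with hc₀def
  set sc := Real.sqrt c₀ with hscdef
  have hsc : 0 < sc := Real.sqrt_pos.2 hc₀pos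
  have hsc2 : sc ^ 2 = c₀ := Real.sq_sqrt hc₀pos.le
  have hSc : c₀ ≤ S := le_trans (le_abs_self _) (hS t₀ ht₀I)
  set sS := Real.sqrt S with hsSdef
  have hsS : 0 < sS := Real.sqrt_pos.2 (lt_of_lt_of_le hc₀pos hSc)
  have hscS : sc ≤ sS := Real.sqrt_le_sqrt hSc
  have hA1 : δ⁻¹ * sS ≤ A₁ := hA₁ ▸ le_max_left _ _
  have hA2 : Real.sqrt K ≤ A₁ := hA₁ ▸ le_max_right _ _
  have hApos : 0 < A₁ := lt_of_lt_of_le (by positivity) hA1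
  have hKA : K ≤ A₁ ^ 2 := by
    calc K = Real.sqrt K ^ 2 := (Real.sq_sqrt hK).symm
      _ ≤ A₁ ^ 2 := by nlinarith [Real.sqrt_nonneg K]
  have hsSδ : sS ≤ A₁ * δ := by
    rw [inv_mul_le_iff₀ hδ0] at hA1; linarith
  -- the radius bound
  have hr : |t - t₀| < δ / 6 := by
    refine lt_of_lt_of_le ht ?_
    rw [inv_mul_le_iff₀ (by positivity)]
    nlinarith [le_trans hscS hsSδ]
  have habs := abs_sub_le_iff.1 hr.le
  -- (a)
  have htI : t ∈ Ioo a₁ b₁ := ⟨by linarith [habs.2], by linarith [habs.1]⟩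
  refine ⟨htI, ?_⟩
  -- Glaeser-type inequality
  set h₀ := sc / (2 * A₁) with hh₀def
  have hh₀pos : 0 < h₀ := by positivity
  have e1 : h₀ * (2 * A₁) = sc := by rw [hh₀def]; field_simp
  have hh₀δ : h₀ ≤ δ / 2 := by
    rw [hh₀def, div_le_div_iff₀ (by positivity) (by norm_num)]
    nlinarith [le_trans hscS hsSδ]
  have hglaeser : |c₁' t₀| * h₀ ≤ c₀ + K * h₀ ^ 2 := by
    rcases le_or_gt 0 (c₁' t₀) with hsgn | hsgn
    · have huI : t₀ - h₀ ∈ Ioo a₁ b₁ := ⟨by linarith, by linarith⟩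
      have htay := taylorAux a₁ b₁ K c₁ c₁' hderiv hK hlip t₀ ht₀I (t₀ - h₀) huI
      have htay' : |c₁ (t₀ - h₀) - c₀ + c₁' t₀ * h₀| ≤ K * h₀ ^ 2 := by
        have e2 : c₁ (t₀ - h₀) - c₀ + c₁' t₀ * h₀
            = c₁ (t₀ - h₀) - c₀ - c₁' t₀ * (t₀ - h₀ - t₀) := by ring
        have e3 : K * h₀ ^ 2 = K * (t₀ - h₀ - t₀) ^ 2 := by ring
        rw [e2, e3]; exact htay
      have hnn := hnonneg _ huI
      rw [abs_of_nonneg hsgn]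
      linarith [(abs_le.1 htay').2]
    · have huI : t₀ + h₀ ∈ Ioo a₁ b₁ := ⟨by linarith, by linarith⟩
      have htay := taylorAux a₁ b₁ K c₁ c₁' hderiv hK hlip t₀ ht₀I (t₀ + h₀) huI
      have htay' : |c₁ (t₀ + h₀) - c₀ - c₁' t₀ * h₀| ≤ K * h₀ ^ 2 := by
        have e2 : c₁ (t₀ + h₀) - c₀ - c₁' t₀ * h₀
            = c₁ (t₀ + h₀) - c₀ - c₁' t₀ * (t₀ + h₀ - t₀) := by ring
        have e3 : K * h₀ ^ 2 = K * (t₀ + h₀ - t₀) ^ 2 := by ring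
        rw [e2, e3]; exact htay
      have hnn := hnonneg _ huI
      rw [abs_of_neg hsgn]
      linarith [(abs_le.1 htay').2]
  have hglaeser2 : |c₁' t₀| ≤ 5 / 2 * A₁ * sc := by
    have e2 : K * h₀ ^ 2 ≤ A₁ ^ 2 * h₀ ^ 2 := by nlinarith [sq_nonneg h₀]
    have e3 : |c₁' t₀| * h₀ * (2 * A₁) ≤ (c₀ + A₁ ^ 2 * h₀ ^ 2) * (2 * A₁) :=
      mul_le_mul_of_nonneg_right (by linarith) (by positivity)
    have e4 : h₀ ^ 2 * (4 * A₁ ^ 2) = sc ^ 2 := by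
      calc h₀ ^ 2 * (4 * A₁ ^ 2) = (h₀ * (2 * A₁)) ^ 2 := by ring
        _ = sc ^ 2 := by rw [e1]
    have e7 : 2 * A₁ ^ 3 * h₀ ^ 2 = A₁ / 2 * sc ^ 2 := by linear_combination (A₁ / 2) * e4
    have e8 : |c₁' t₀| * sc = |c₁' t₀| * h₀ * (2 * A₁) := by rw [← e1]; ring
    have e9 : (c₀ + A₁ ^ 2 * h₀ ^ 2) * (2 * A₁) = 2 * A₁ * c₀ + 2 * A₁ ^ 3 * h₀ ^ 2 := by ring
    have e10 : 2 * A₁ * c₀ = 2 * A₁ * sc ^ 2 := by rw [hsc2]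
    have e5 : |c₁' t₀| * sc ≤ 5 / 2 * A₁ * sc ^ 2 := by
      rw [e8]; linarith [e3, e9 ▸ e3]
    nlinarith [e5, hsc]
  -- Taylor at t
  have htay := taylorAux a₁ b₁ K c₁ c₁' hderiv hK hlip t₀ ht₀I t htI
  have hrA : |t - t₀| ≤ sc / (6 * A₁) := by
    rw [inv_mul_eq_div] at ht; linarith
  have hr0 : 0 ≤ |t - t₀| := abs_nonneg _
  have hterm1 : |c₁' t₀ * (t - t₀)| ≤ 5 / 12 * c₀ := by
    rw [abs_mul]
    calc |c₁' t₀| * |t - t₀| ≤ (5 / 2 * A₁ * sc) * (sc / (6 * A₁)) :=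
          mul_le_mul hglaeser2 hrA hr0 (by positivity)
      _ = 5 / 12 * c₀ := by rw [← hsc2]; field_simp; ring
  have hterm2 : K * (t - t₀) ^ 2 ≤ c₀ / 36 := by
    have h1 : (t - t₀) ^ 2 ≤ (sc / (6 * A₁)) ^ 2 := by
      rw [← sq_abs]; exact pow_le_pow_left₀ hr0 hrA 2
    calc K * (t - t₀) ^ 2 ≤ A₁ ^ 2 * (sc / (6 * A₁)) ^ 2 := by
          nlinarith [mul_le_mul_of_nonneg_right hKA (sq_nonneg (t - t₀)),
            mul_le_mul_of_nonneg_left h1 (sq_nonneg A₁)]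
      _ = c₀ / 36 := by rw [← hsc2]; field_simp; ring
  have hclose : |c₁ t - c₀| ≤ 4 / 9 * c₀ := by
    have h1 : |c₁ t - c₀| ≤ |c₁ t - c₀ - c₁' t₀ * (t - t₀)| + |c₁' t₀ * (t - t₀)| := by
      calc |c₁ t - c₀|
          = |(c₁ t - c₀ - c₁' t₀ * (t - t₀)) + c₁' t₀ * (t - t₀)| := by
            rw [show (c₁ t - c₀ - c₁' t₀ * (t - t₀)) + c₁' t₀ * (t - t₀) = c₁ t - c₀ from by ring]
        _ ≤ _ := abs_add_le _ _
    linarith [htay, hterm1, hterm2]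
  have habs4 := abs_le.1 hclose
  constructor
  · rw [le_div_iff₀ hc₀pos]; linarith [habs4.1]
  · rw [div_le_iff₀ hc₀pos]; linarith [habs4.2]
end

section
/- Let V be a finite-dimensional real inner product space with a linear isometric action of a finite group G, and let σ : V → ℝⁿ be continuous, proper, and G-invariant, separating G-orbits. Suppose c : I → ℝⁿ is continuous with c(I) ⊆ σ(V), and c̄, c̃ : [s,t] → V are continuous lifts of c (σ∘c̄ = σ∘c̃ = c). Then there exist a finite sequence s = t₀ < t₁ < ⋯ < t_ℓ = t and group elements g₁, …, g_ℓ ∈ G such that c̃(t_{i-1}) = g_i c̄(t_{i-1}) and c̃(t_i) = g_i c̄(t_i) for all i. Consequently ‖c̃(s) − c̃(t)‖ ≤ Σ_i ‖c̄(t_{i-1}) − c̄(t_i)‖. -/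
open Set

/-- Comparing two continuous lifts over a finite group: let `G` be finite acting by linear
isometries on `V`, `σ : V → ℝⁿ` continuous, proper, `G`-invariant, and separating orbits.
If `c̄, c̃` are continuous lifts on `[s,t]` of the same continuous curve `c` (with values in
`σ(V)`), then there are `s = t₀ < t₁ < ⋯ < t_ℓ = t` and `g₁, …, g_ℓ ∈ G` with
`c̃ = g_i c̄` at both `t_{i-1}` and `t_i`; consequently
`‖c̃ s − c̃ t‖ ≤ Σ_i ‖c̄ (t_{i-1}) − c̄ (t_i)‖`. -/
theorem stmt15 {V : Type*} [NormedAddCommGroup V] [InnerProductSpace ℝ V]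
    [FiniteDimensional ℝ V]
    {G : Type*} [Group G] [Finite G] (ρ : G →* (V ≃ₗᵢ[ℝ] V))
    (n : ℕ) (σ : V → Fin n → ℝ)
    (hσcont : Continuous σ) (hσproper : IsProperMap σ)
    (hinv : ∀ (g : G) (v : V), σ (ρ g v) = σ v)
    (hsep : ∀ v w : V, σ v = σ w → ∃ g : G, ρ g w = v)
    (I : Set ℝ) (c : ℝ → Fin n → ℝ)
    (hc : ContinuousOn c I) (hrange : ∀ r ∈ I, ∃ v : V, σ v = c r)
    (s t : ℝ) (hst : s ≤ t) (hsub : Icc s t ⊆ I)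
    (cbar ctil : ℝ → V)
    (hcbarc : ContinuousOn cbar (Icc s t)) (hctilc : ContinuousOn ctil (Icc s t))
    (hcbar : ∀ r ∈ Icc s t, σ (cbar r) = c r)
    (hctil : ∀ r ∈ Icc s t, σ (ctil r) = c r) :
    ∃ (ℓ : ℕ) (τ : ℕ → ℝ) (g : ℕ → G),
      τ 0 = s ∧ τ ℓ = t ∧
      (∀ i < ℓ, τ i < τ (i + 1)) ∧
      (∀ i ≤ ℓ, τ i ∈ Icc s t) ∧
      (∀ i < ℓ, ctil (τ i) = ρ (g i) (cbar (τ i)) ∧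
        ctil (τ (i + 1)) = ρ (g i) (cbar (τ (i + 1)))) ∧
      ‖ctil s - ctil t‖ ≤ ∑ i ∈ Finset.range ℓ, ‖cbar (τ i) - cbar (τ (i + 1))‖ := by
  classical
  -- the closed sets J g
  set J : G → Set ℝ := fun g =>
    Icc s t ∩ (fun r => ctil r - ρ g (cbar r)) ⁻¹' {0} with hJdef
  have hJmem : ∀ g r, r ∈ J g ↔ r ∈ Icc s t ∧ ctil r = ρ g (cbar r) := by
    intro g r
    simp [hJdef, sub_eq_zero]
  have hJclosed : ∀ g, IsClosed (J g) := by
    intro g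
    have hcont : ContinuousOn (fun r => ctil r - ρ g (cbar r)) (Icc s t) :=
      hctilc.sub (((ρ g).continuous).comp_continuousOn hcbarc)
    exact hcont.preimage_isClosed_of_isClosed isClosed_Icc isClosed_singleton
  have hcover : ∀ r ∈ Icc s t, ∃ g, r ∈ J g := by
    intro r hr
    obtain ⟨g, hg⟩ := hsep (ctil r) (cbar r) (by rw [hctil r hr, hcbar r hr])
    exact ⟨g, (hJmem g r).2 ⟨hr, hg.symm⟩⟩
  -- chain set
  set S : Set ℝ := {u | u ∈ Icc s t ∧ ∃ (ℓ : ℕ) (τ : ℕ → ℝ) (g : ℕ → G),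
      τ 0 = s ∧ τ ℓ = u ∧
      (∀ i < ℓ, τ i < τ (i + 1)) ∧
      (∀ i ≤ ℓ, τ i ∈ Icc s t) ∧
      (∀ i < ℓ, ctil (τ i) = ρ (g i) (cbar (τ i)) ∧
        ctil (τ (i + 1)) = ρ (g i) (cbar (τ (i + 1))))} with hSdef
  have hsS : s ∈ S := by
    refine ⟨⟨le_refl s, hst⟩, 0, fun _ => s, fun _ => 1, rfl, rfl, ?_, ?_, ?_⟩
    · intro i hi; omega
    · intro i _; exact ⟨le_refl s, hst⟩
    · intro i hi; omega
  -- extension lemma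
  have hext : ∀ u v (g : G), u ∈ S → u < v → u ∈ J g → v ∈ J g → v ∈ S := by
    intro u v g hu huv hug hvg
    obtain ⟨huI, ℓ, τ, gs, hτ0, hτℓ, hmono, hmemI, hlift⟩ := hu
    obtain ⟨hvI, hveq⟩ := (hJmem g v).1 hvg
    obtain ⟨-, hueq⟩ := (hJmem g u).1 hug
    refine ⟨hvI, ℓ + 1, fun i => if i ≤ ℓ then τ i else v,
      fun i => if i < ℓ then gs i else g, ?_, ?_, ?_, ?_, ?_⟩
    · simp [hτ0]
    · simp
    · intro i hi
      beta_reduce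
      rcases lt_or_eq_of_le (Nat.lt_succ_iff.1 hi) with h | h
      · rw [if_pos (Nat.le_of_lt h), if_pos (Nat.succ_le_of_lt h)]
        exact hmono i h
      · rw [if_pos (le_of_eq h), if_neg (show ¬ i + 1 ≤ ℓ by omega), h, hτℓ]
        exact huv
    · intro i hi
      beta_reduce
      by_cases h : i ≤ ℓ
      · rw [if_pos h]; exact hmemI i h
      · rw [if_neg h]; exact hvI
    · intro i hi
      beta_reduce
      rcases lt_or_eq_of_le (Nat.lt_succ_iff.1 hi) with h | h
      · rw [if_pos h, if_pos (Nat.le_of_lt h), if_pos (Nat.succ_le_of_lt h)]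
        exact hlift i h
      · rw [if_neg (show ¬ i < ℓ by omega), if_pos (le_of_eq h), if_neg (show ¬ i + 1 ≤ ℓ by omega), h, hτℓ]
        exact ⟨hueq, hveq⟩
  -- closure extraction
  have hextract : ∀ (A : Set ℝ), A ⊆ Icc s t → ∀ x, x ∈ closure A →
      ∃ g, x ∈ J g ∧ (A ∩ J g).Nonempty := by
    intro A hA x hx
    have key : ∃ g, x ∈ closure (A ∩ J g) := by
      by_contra h
      push_neg at h
      have hopen : IsOpen (⋂ g, (closure (A ∩ J g))ᶜ) :=
        isOpen_iInter_of_finite fun g => isClosed_closure.isOpen_compl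
      have hxmem : x ∈ ⋂ g, (closure (A ∩ J g))ᶜ := by
        exact mem_iInter.2 fun g => h g
      obtain ⟨y, hy1, hy2⟩ := mem_closure_iff.1 hx _ hopen hxmem
      obtain ⟨g, hg⟩ := hcover y (hA hy2)
      have : y ∈ closure (A ∩ J g) := subset_closure ⟨hy2, hg⟩
      exact (mem_iInter.1 hy1 g) this
    obtain ⟨g, hg⟩ := key
    have hne : (A ∩ J g).Nonempty := by
      rcases eq_empty_or_nonempty (A ∩ J g) with h | h
      · rw [h, closure_empty] at hg; exact absurd hg (notMem_empty x)
      · exact h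
    exact ⟨g, (hJclosed g).closure_eq ▸ closure_mono inter_subset_right hg, hne⟩
  -- sSup
  have hSne : S.Nonempty := ⟨s, hsS⟩
  have hSbdd : BddAbove S := ⟨t, fun u hu => hu.1.2⟩
  set T := sSup S with hTdef
  have hTle : T ≤ t := csSup_le hSne fun u hu => hu.1.2
  have hsT : s ≤ T := le_csSup hSbdd hsS
  have hTS : T ∈ S := by
    have hTcl : T ∈ closure S := csSup_mem_closure hSne hSbdd
    obtain ⟨g, hTg, u, huS, hug⟩ := hextract S (fun u hu => hu.1) T hTcl
    by_cases h : T ∈ S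
    · exact h
    · have huT : u < T := lt_of_le_of_ne (le_csSup hSbdd huS) (fun he => h (he ▸ huS))
      exact hext u T g huS huT hug hTg
  have hTt : T = t := by
    by_contra h
    have hTlt : T < t := lt_of_le_of_ne hTle h
    have hIoc : Ioc T t ⊆ Icc s t := fun r hr => ⟨le_trans hsT (le_of_lt hr.1), hr.2⟩
    have hTcl : T ∈ closure (Ioc T t) := by
      rw [closure_Ioc (ne_of_lt hTlt)]
      exact ⟨le_refl T, le_of_lt hTlt⟩
    obtain ⟨g, hTg, u, huIoc, hug⟩ := hextract (Ioc T t) hIoc T hTcl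
    have huS : u ∈ S := hext T u g hTS huIoc.1 hTg hug
    exact absurd (le_csSup hSbdd huS) (not_le.2 huIoc.1)
  -- conclude
  rw [hTt] at hTS
  obtain ⟨-, ℓ, τ, gs, hτ0, hτℓ, hmono, hmemI, hlift⟩ := hTS
  refine ⟨ℓ, τ, gs, hτ0, hτℓ, hmono, hmemI, hlift, ?_⟩
  have htel : ctil s - ctil t = ∑ i ∈ Finset.range ℓ, (ctil (τ i) - ctil (τ (i + 1))) := by
    rw [Finset.sum_range_sub' (fun i => ctil (τ i)), hτ0, hτℓ]
  calc ‖ctil s - ctil t‖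
      = ‖∑ i ∈ Finset.range ℓ, (ctil (τ i) - ctil (τ (i + 1)))‖ := by rw [htel]
    _ ≤ ∑ i ∈ Finset.range ℓ, ‖ctil (τ i) - ctil (τ (i + 1))‖ := norm_sum_le _ _
    _ = ∑ i ∈ Finset.range ℓ, ‖cbar (τ i) - cbar (τ (i + 1))‖ := by
        refine Finset.sum_congr rfl fun i hi => ?_
        obtain ⟨h1, h2⟩ := hlift i (Finset.mem_range.1 hi)
        rw [h1, h2, ← LinearIsometryEquiv.map_sub, LinearIsometryEquiv.norm_map]
end

section
/- Let [s,t] ⊆ ℝ be a compact interval covered by finitely many closed sets J₁, …, J_N with [s,t] = J₁ ∪ ⋯ ∪ J_N and s ∈ J₁ ∪ ⋯ ∪ J_N. Then there exist indices i₁, …, i_ℓ ∈ {1,…,N} and points s = t₀ < t₁ < ⋯ < t_ℓ = t such that consecutive points t_{k-1} and t_k both belong to J_{i_k} for each k = 1, …, ℓ. -/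
open Set

theorem chain_extend {s : ℝ} {N : ℕ} {J : Fin N → Set ℝ} {a b : ℝ} {i : Fin N}
    (hab : a < b) (ha : a ∈ J i) (hb : b ∈ J i)
    (h : ∃ (ℓ : ℕ) (τ : ℕ → ℝ) (idx : ℕ → Fin N),
      τ 0 = s ∧ τ ℓ = a ∧
      (∀ k < ℓ, τ k < τ (k + 1)) ∧
      (∀ k < ℓ, τ k ∈ J (idx k) ∧ τ (k + 1) ∈ J (idx k))) :
    ∃ (ℓ : ℕ) (τ : ℕ → ℝ) (idx : ℕ → Fin N),
      τ 0 = s ∧ τ ℓ = b ∧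
      (∀ k < ℓ, τ k < τ (k + 1)) ∧
      (∀ k < ℓ, τ k ∈ J (idx k) ∧ τ (k + 1) ∈ J (idx k)) := by
  obtain ⟨ℓ, τ, idx, h0, hℓ, hmono, hmem⟩ := h
  refine ⟨ℓ + 1, fun k => if k ≤ ℓ then τ k else b, fun k => if k < ℓ then idx k else i,
    ?_, ?_, ?_, ?_⟩
  · simp [Nat.zero_le, h0]
  · simp
  · intro k hk
    dsimp only
    rcases Nat.lt_or_ge k ℓ with h1 | h1
    · rw [if_pos (Nat.le_of_lt h1), if_pos (Nat.succ_le_of_lt h1)]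
      exact hmono k h1
    · have hkℓ : k = ℓ := Nat.le_antisymm (Nat.lt_succ_iff.mp hk) h1
      subst hkℓ
      rw [if_pos le_rfl, if_neg (by omega), hℓ]
      exact hab
  · intro k hk
    dsimp only
    rcases Nat.lt_or_ge k ℓ with h1 | h1
    · rw [if_pos h1, if_pos (Nat.le_of_lt h1), if_pos (Nat.succ_le_of_lt h1)]
      exact hmem k h1
    · have hkℓ : k = ℓ := Nat.le_antisymm (Nat.lt_succ_iff.mp hk) h1
      subst hkℓ
      rw [if_neg (lt_irrefl _), if_pos le_rfl, if_neg (by omega), hℓ]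
      exact ⟨ha, hb⟩

/-- Chaining lemma for finite closed covers of an interval: if `[s,t] = J₁ ∪ ⋯ ∪ J_N` with
each `J_i` closed, then there are indices `i₁, …, i_ℓ` and points
`s = t₀ < t₁ < ⋯ < t_ℓ = t` such that `t_{k-1}, t_k ∈ J_{i_k}` for each `k`. -/
theorem stmt16 (s t : ℝ) (hst : s ≤ t) (N : ℕ) (J : Fin N → Set ℝ)
    (hclosed : ∀ i, IsClosed (J i))
    (hcover : Icc s t ⊆ ⋃ i, J i) :
    ∃ (ℓ : ℕ) (τ : ℕ → ℝ) (idx : ℕ → Fin N),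
      τ 0 = s ∧ τ ℓ = t ∧
      (∀ k < ℓ, τ k < τ (k + 1)) ∧
      (∀ k < ℓ, τ k ∈ J (idx k) ∧ τ (k + 1) ∈ J (idx k)) := by
  classical
  obtain ⟨i0, -⟩ := mem_iUnion.mp (hcover ⟨le_rfl, hst⟩)
  set P : ℝ → Prop := fun x =>
    ∃ (ℓ : ℕ) (τ : ℕ → ℝ) (idx : ℕ → Fin N),
      τ 0 = s ∧ τ ℓ = x ∧
      (∀ k < ℓ, τ k < τ (k + 1)) ∧
      (∀ k < ℓ, τ k ∈ J (idx k) ∧ τ (k + 1) ∈ J (idx k)) with hPdef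
  have hPs : P s := ⟨0, fun _ => s, fun _ => i0, rfl, rfl,
    fun k hk => absurd hk (Nat.not_lt_zero k), fun k hk => absurd hk (Nat.not_lt_zero k)⟩
  set A : Set ℝ := {x | x ∈ Icc s t ∧ P x} with hA
  have hAne : A.Nonempty := ⟨s, ⟨le_rfl, hst⟩, hPs⟩
  have hAbdd : BddAbove A := ⟨t, fun x hx => hx.1.2⟩
  set u : ℝ := sSup A with hu
  have hsu : s ≤ u := le_csSup hAbdd ⟨⟨le_rfl, hst⟩, hPs⟩
  have hut : u ≤ t := csSup_le hAne fun x hx => hx.1.2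
  have huIcc : u ∈ Icc s t := ⟨hsu, hut⟩
  -- u ∈ A
  have huA : P u := by
    have hucl : u ∈ closure A := by
      rcases hAne with ⟨a, ha⟩
      exact (isLUB_csSup ⟨a, ha⟩ hAbdd).mem_closure ⟨a, ha⟩
    have hsub : A ⊆ ⋃ i, (J i ∩ A) := by
      intro x hx
      obtain ⟨i, hi⟩ := mem_iUnion.mp (hcover hx.1)
      exact mem_iUnion.mpr ⟨i, hi, hx⟩
    have : u ∈ ⋃ i, closure (J i ∩ A) := by
      rw [← closure_iUnion_of_finite]
      exact closure_mono hsub hucl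
    obtain ⟨i, hi⟩ := mem_iUnion.mp this
    have huJ : u ∈ J i := (hclosed i).closure_subset (closure_mono inter_subset_left hi)
    have hne : (J i ∩ A).Nonempty := by
      by_contra h
      rw [not_nonempty_iff_eq_empty.mp h, closure_empty] at hi
      exact hi
    obtain ⟨a, haJ, haA⟩ := hne
    rcases eq_or_lt_of_le (le_csSup hAbdd haA) with h | h
    · exact (show a = u from h.trans hu.symm) ▸ haA.2
    · exact chain_extend h haJ huJ haA.2
  -- u = t
  rcases eq_or_lt_of_le hut with h | h
  · exact h ▸ huA
  · exfalso
    have hsub : Ioc u t ⊆ ⋃ i, (J i ∩ Ioc u t) := by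
      intro x hx
      obtain ⟨i, hi⟩ := mem_iUnion.mp (hcover ⟨hsu.trans hx.1.le, hx.2⟩)
      exact mem_iUnion.mpr ⟨i, hi, hx⟩
    have hucl : u ∈ closure (Ioc u t) := by
      rw [closure_Ioc h.ne]
      exact ⟨le_rfl, hut⟩
    have : u ∈ ⋃ i, closure (J i ∩ Ioc u t) := by
      rw [← closure_iUnion_of_finite]
      exact closure_mono hsub hucl
    obtain ⟨i, hi⟩ := mem_iUnion.mp this
    have huJ : u ∈ J i := (hclosed i).closure_subset (closure_mono inter_subset_left hi)
    have hne : (J i ∩ Ioc u t).Nonempty := by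
      by_contra hc
      rw [not_nonempty_iff_eq_empty.mp hc, closure_empty] at hi
      exact hi
    obtain ⟨y, hyJ, hy1, hy2⟩ := hne
    have hyA : y ∈ A := ⟨⟨hsu.trans hy1.le, hy2⟩, chain_extend hy1 huJ hyJ huA⟩
    exact absurd (le_csSup hAbdd hyA) (not_le.mpr hy1)
end
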